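/- arXiv:2309.00766 — 8 statements merged into one kernel-verified Lean document; each statement's English description precedes it below -/
import Mathlib

section
/- Let f : [0,∞) → ℝ be a probability density supported on [0,1] that is α-Hölder continuous (0 < α ≤ 1). For B > 1 and integer ℓ ≠ 0, the Mellin transform satisfies |Mf(1 - 2πiℓ/log B)| < 1, where Mf(s) = ∫_0^∞ f(x) x^{s-1} dx. -/
open MeasureTheory Set Filter

/-- For an `α`-Hölder continuous probability density supported on `[0,1]`, `B > 1` and
nonzero integer `ℓ`, the Mellin transform satisfies `|Mf(1 - 2πiℓ/log B)| < 1`. -/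
theorem stmt_3 (f : ℝ → ℝ) (α C : ℝ) (hα0 : 0 < α) (hα1 : α ≤ 1) (hC : 0 ≤ C)
    (hnn : ∀ x, 0 ≤ f x) (hsupp : ∀ x, x ∉ Set.Icc (0:ℝ) 1 → f x = 0)
    (hHolder : ∀ x y : ℝ, |f x - f y| ≤ C * |x - y| ^ α)
    (hprob : ∫ x, f x = 1)
    (B : ℝ) (hB : 1 < B) (ℓ : ℤ) (hℓ : ℓ ≠ 0) :
    ‖(∫ x in Set.Ioi (0:ℝ), (f x : ℂ) *
      (x : ℂ) ^ (((1 : ℂ) - 2 * Real.pi * Complex.I * (ℓ : ℂ) / (Real.log B : ℂ)) - 1))‖ < 1 := by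
  have hL0 : 0 < Real.log B := Real.log_pos hB
  set L : ℝ := Real.log B with hLdef
  set τ : ℝ := -(2 * Real.pi * ℓ) / L with hτdef
  have hτ0 : τ ≠ 0 := by
    apply div_ne_zero
    · simp only [neg_ne_zero]
      exact mul_ne_zero (mul_ne_zero two_ne_zero Real.pi_ne_zero)
        (Int.cast_ne_zero.mpr hℓ)
    · exact hL0.ne'
  -- continuity of f
  have hf_cont : Continuous f := by
    rw [continuous_iff_continuousAt]
    intro x
    rw [ContinuousAt, tendsto_iff_dist_tendsto_zero]
    refine squeeze_zero (g := fun y => C * |y - x| ^ α) (fun y => dist_nonneg) (fun y => ?_) ?_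
    · show dist (f y) (f x) ≤ C * |y - x| ^ α
      rw [Real.dist_eq]; exact hHolder y x
    · have h1 : Filter.Tendsto (fun y : ℝ => |y - x|) (nhds x) (nhds 0) := by
        have := ((continuous_id.sub (continuous_const (y := x))).abs).tendsto x
        simpa using this
      have h2 : ContinuousAt (fun t : ℝ => t ^ α) 0 :=
        Real.continuousAt_rpow_const 0 α (Or.inr hα0.le)
      have h3 := h2.tendsto.comp h1
      rw [Real.zero_rpow hα0.ne'] at h3
      have h4 := h3.const_mul C
      simpa using h4
  have hcs : HasCompactSupport f := HasCompactSupport.intro isCompact_Icc hsupp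
  have hf_int : Integrable f := hf_cont.integrable_of_hasCompactSupport hcs
  -- a.e. nonzero point
  have hne0 : ∀ᵐ x : ℝ, x ≠ (0:ℝ) := by
    refine ae_iff.mpr ?_
    have : {x : ℝ | ¬ x ≠ 0} = {0} := by ext x; simp
    rw [this]
    exact measure_singleton 0
  -- integral of f over Ioi 0 is 1
  have hIic : ∫ x in Iic (0:ℝ), f x = 0 := by
    refine integral_eq_zero_of_ae ?_
    have : ∀ᵐ x ∂(volume.restrict (Iic (0:ℝ))), f x = 0 := by
      rw [ae_restrict_iff' measurableSet_Iic]
      filter_upwards [hne0] with x hx hxle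
      exact hsupp x (fun hm => absurd hm.1 (not_le.mpr (lt_of_le_of_ne hxle hx)))
    exact this.mono fun x hx => hx
  have hIoi : ∫ x in Ioi (0:ℝ), f x = 1 := by
    have := intervalIntegral.integral_Iic_add_Ioi (b := (0:ℝ))
      hf_int.integrableOn hf_int.integrableOn
    rw [hIic, zero_add, hprob] at this
    exact this
  -- rewrite the exponent
  have hexp : ((1 : ℂ) - 2 * Real.pi * Complex.I * (ℓ : ℂ) / (L : ℂ)) - 1
      = (τ : ℂ) * Complex.I := by
    rw [hτdef]; push_cast; ring
  rw [hexp]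
  -- rewrite the integrand
  have hcongr : EqOn (fun x : ℝ => (f x : ℂ) * (x : ℂ) ^ ((τ : ℂ) * Complex.I))
      (fun x : ℝ => (f x : ℂ) * Complex.exp (((τ * Real.log x : ℝ) : ℂ) * Complex.I))
      (Ioi (0:ℝ)) := by
    intro x hx
    have hx0 : (0:ℝ) < x := hx
    have hxne : (x : ℂ) ≠ 0 := by exact_mod_cast hx0.ne'
    simp only
    congr 1
    rw [Complex.cpow_def_of_ne_zero hxne, ← Complex.ofReal_log hx0.le]
    push_cast
    ring_nf
  rw [setIntegral_congr_fun measurableSet_Ioi hcongr]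
  -- integrability of such twisted integrands
  have key : ∀ ψ : ℝ → ℝ, Measurable ψ →
      IntegrableOn (fun x => (f x : ℂ) * Complex.exp ((ψ x : ℂ) * Complex.I)) (Ioi (0:ℝ)) := by
    intro ψ hψ
    have hmeas : AEStronglyMeasurable
        (fun x => (f x : ℂ) * Complex.exp ((ψ x : ℂ) * Complex.I))
        (volume.restrict (Ioi (0:ℝ))) := by
      apply Measurable.aestronglyMeasurable
      exact (Complex.measurable_ofReal.comp hf_cont.measurable).mul
        (Complex.measurable_exp.comp
          ((Complex.measurable_ofReal.comp hψ).mul measurable_const))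
    refine Integrable.mono' hf_int.integrableOn hmeas ?_
    filter_upwards with x
    have : ‖(f x : ℂ) * Complex.exp ((ψ x : ℂ) * Complex.I)‖ = f x := by
      rw [norm_mul, Complex.norm_real,
        Complex.norm_exp_ofReal_mul_I, Real.norm_eq_abs, abs_of_nonneg (hnn x), mul_one]
    rw [this]
  set g : ℝ → ℂ := fun x => (f x : ℂ) * Complex.exp (((τ * Real.log x : ℝ) : ℂ) * Complex.I)
    with hgdef
  have hg_int : IntegrableOn g (Ioi (0:ℝ)) := key _ ((measurable_const.mul Real.measurable_log))
  set I0 : ℂ := ∫ x in Ioi (0:ℝ), g x with hI0def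
  set θ : ℝ := I0.arg with hθdef
  -- polar identity
  have hpolar : ((‖I0‖ : ℝ) : ℂ) = Complex.exp (((-θ : ℝ) : ℂ) * Complex.I) * I0 := by
    calc ((‖I0‖ : ℝ) : ℂ)
        = ((‖I0‖ : ℝ) : ℂ) *
            (Complex.exp (((-θ : ℝ) : ℂ) * Complex.I) * Complex.exp (((θ : ℝ) : ℂ) * Complex.I)) := by
          rw [← Complex.exp_add, show ((-θ : ℝ) : ℂ) * Complex.I + ((θ : ℝ) : ℂ) * Complex.I = 0 by
            push_cast; ring, Complex.exp_zero, mul_one]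
      _ = Complex.exp (((-θ : ℝ) : ℂ) * Complex.I) *
            (((‖I0‖ : ℝ) : ℂ) * Complex.exp (((θ : ℝ) : ℂ) * Complex.I)) := by ring
      _ = Complex.exp (((-θ : ℝ) : ℂ) * Complex.I) * I0 := by
          rw [hθdef, Complex.norm_mul_exp_arg_mul_I]
  -- the twisted function with phase shift
  set g2 : ℝ → ℂ := fun x => (f x : ℂ) * Complex.exp (((τ * Real.log x - θ : ℝ) : ℂ) * Complex.I)
    with hg2def
  have hg2_int : IntegrableOn g2 (Ioi (0:ℝ)) :=
    key _ ((measurable_const.mul Real.measurable_log).sub measurable_const)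
  have hshift : ∀ x : ℝ, Complex.exp (((-θ : ℝ) : ℂ) * Complex.I) * g x = g2 x := by
    intro x
    rw [hgdef, hg2def]
    simp only
    rw [show (((τ * Real.log x - θ : ℝ)) : ℂ) * Complex.I
        = ((τ * Real.log x : ℝ) : ℂ) * Complex.I + ((-θ : ℝ) : ℂ) * Complex.I by push_cast; ring,
      Complex.exp_add]
    ring
  have hI0g2 : Complex.exp (((-θ : ℝ) : ℂ) * Complex.I) * I0 = ∫ x in Ioi (0:ℝ), g2 x := by
    rw [hI0def, ← integral_const_mul]
    exact setIntegral_congr_fun measurableSet_Ioi (fun x _ => hshift x)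
  -- real part computation
  set φ : ℝ → ℝ := fun x => f x * Real.cos (τ * Real.log x - θ) with hφdef
  have hg2re : ∀ x : ℝ, (g2 x).re = φ x := by
    intro x
    show ((f x : ℂ) * Complex.exp (((τ * Real.log x - θ : ℝ) : ℂ) * Complex.I)).re
      = f x * Real.cos (τ * Real.log x - θ)
    rw [Complex.mul_re, Complex.ofReal_re, Complex.ofReal_im, Complex.exp_ofReal_mul_I_re,
      zero_mul, sub_zero]
  have hφ_int : IntegrableOn φ (Ioi (0:ℝ)) := by
    have := hg2_int.re
    exact this.congr (Filter.Eventually.of_forall fun x => hg2re x)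
  have habs : ‖I0‖ = ∫ x in Ioi (0:ℝ), φ x := by
    have h1 : ‖I0‖ = (∫ x in Ioi (0:ℝ), g2 x).re := by
      rw [← hI0g2, ← hpolar, Complex.ofReal_re]
    have h2 := Complex.reCLM.integral_comp_comm hg2_int
    simp only [Complex.reCLM_apply] at h2
    rw [h1, ← h2]
    exact setIntegral_congr_fun measurableSet_Ioi (fun x _ => hg2re x)
  -- find a point where f is positive
  have hx0 : ∃ x0 : ℝ, 0 < x0 ∧ 0 < f x0 := by
    by_contra h
    push_neg at h
    have hz : ∀ᵐ x : ℝ, f x = 0 := by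
      filter_upwards [hne0] with x hx
      rcases lt_trichotomy x 0 with hlt | heq | hgt
      · exact hsupp x (fun hm => absurd hm.1 (not_le.mpr hlt))
      · exact absurd heq hx
      · exact le_antisymm (h x hgt) (hnn x)
    have : ∫ x, f x = 0 := integral_eq_zero_of_ae hz
    rw [hprob] at this
    norm_num at this
  obtain ⟨x0, hx0pos, hfx0⟩ := hx0
  have hev : ∀ᶠ y in nhds x0, 0 < f y :=
    (hf_cont.tendsto x0).eventually (eventually_gt_nhds hfx0)
  obtain ⟨ε, hε, hball⟩ := Metric.eventually_nhds_iff.mp hev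
  set δ : ℝ := min ε x0 with hδdef
  have hδ0 : 0 < δ := lt_min hε hx0pos
  set a : ℝ := x0 - δ/2 with hadef
  set b : ℝ := x0 + δ/2 with hbdef
  have ha0 : 0 < a := by
    have : δ ≤ x0 := min_le_right _ _
    rw [hadef]; linarith
  have hfpos : ∀ x ∈ Ioo a b, 0 < f x := by
    intro x hx
    apply hball
    rw [Real.dist_eq, abs_lt]
    constructor
    · have := hx.1; have : a < x := hx.1
      have hδε : δ ≤ ε := min_le_left _ _
      rw [hadef] at this; linarith
    · have : x < b := hx.2
      have hδε : δ ≤ ε := min_le_left _ _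
      rw [hbdef] at this; linarith
  -- the bad set where cos = 1 is countable
  set S : Set ℝ := {x : ℝ | Real.cos (τ * Real.log x - θ) = 1} with hSdef
  have hSnull : volume (S ∩ Ioo a b) = 0 := by
    have hsub : S ∩ Ioo a b ⊆ Set.range (fun n : ℤ => Real.exp ((θ + n * (2 * Real.pi)) / τ)) := by
      rintro x ⟨hxS, hxab⟩
      obtain ⟨n, hn⟩ := (Real.cos_eq_one_iff _).mp hxS
      refine ⟨n, ?_⟩
      have hxpos : 0 < x := lt_trans ha0 hxab.1
      have h5 : τ * Real.log x = θ + n * (2 * Real.pi) := by linarith [hn]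
      have hlog : Real.log x = (θ + n * (2 * Real.pi)) / τ :=
        eq_div_of_mul_eq hτ0 (by linear_combination h5)
      show Real.exp ((θ + (n:ℝ) * (2 * Real.pi)) / τ) = x
      rw [← hlog, Real.exp_log hxpos]
    exact measure_mono_null hsub ((Set.countable_range _).measure_zero _)
  -- positivity of the defect integral
  have hdiff_int : IntegrableOn (fun x => f x - φ x) (Ioi (0:ℝ)) :=
    hf_int.integrableOn.sub hφ_int
  have hpos : 0 < ∫ x in Ioi (0:ℝ), (f x - φ x) := by
    rw [setIntegral_pos_iff_support_of_nonneg_ae ?_ hdiff_int]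
    · -- measure of support is positive
      have hsub2 : Ioo a b \ (S ∩ Ioo a b) ⊆
          Function.support (fun x => f x - φ x) ∩ Ioi (0:ℝ) := by
        rintro x ⟨hxab, hxS⟩
        have hfx : 0 < f x := hfpos x hxab
        have hxnotS : x ∉ S := fun h => hxS ⟨h, hxab⟩
        have hcos : Real.cos (τ * Real.log x - θ) < 1 :=
          lt_of_le_of_ne (Real.cos_le_one _) hxnotS
        constructor
        · simp only [Function.mem_support, hφdef]
          nlinarith
        · exact lt_trans ha0 hxab.1
      refine lt_of_lt_of_le ?_ (measure_mono hsub2)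
      rw [measure_diff_null hSnull, Real.volume_Ioo]
      apply ENNReal.ofReal_pos.mpr
      rw [hadef, hbdef]; linarith
    · -- a.e. nonneg
      filter_upwards with x
      have h1 : Real.cos (τ * Real.log x - θ) ≤ 1 := Real.cos_le_one _
      have h2 := hnn x
      simp only [hφdef, Pi.zero_apply]
      nlinarith
  have hsplit : ∫ x in Ioi (0:ℝ), (f x - φ x)
      = (∫ x in Ioi (0:ℝ), f x) - ∫ x in Ioi (0:ℝ), φ x :=
    integral_sub hf_int.integrableOn hφ_int
  rw [habs]
  rw [hsplit, hIoi] at hpos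
  linarith
end

section
/- Let f : [0,∞) → ℝ be a probability density supported on [0,1] that is α-Hölder continuous with 0 < α ≤ 1. Then for B > 1, the sum over nonzero integers ℓ of |Mf(1 - 2πiℓ/log B)|^n tends to 0 as n → ∞. -/
open MeasureTheory Set Complex Filter

theorem cont_of_holder (f : ℝ → ℝ) (α C : ℝ) (hα0 : 0 < α)
    (hHolder : ∀ x y : ℝ, |f x - f y| ≤ C * |x - y| ^ α) : Continuous f := by
  rw [continuous_iff_continuousAt]
  intro x0
  rw [ContinuousAt, ← tendsto_sub_nhds_zero_iff]
  apply squeeze_zero_norm (fun y => hHolder y x0)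
  have h1 : Tendsto (fun y : ℝ => |y - x0|) (nhds x0) (nhds 0) := by
    have : Continuous (fun y : ℝ => |y - x0|) := (continuous_id.sub continuous_const).abs
    have := this.tendsto x0
    simpa using this
  have h2 : Tendsto (fun s : ℝ => C * s ^ α) (nhds 0) (nhds 0) := by
    have : ContinuousAt (fun s : ℝ => C * s ^ α) 0 :=
      continuousAt_const.mul (Real.continuousAt_rpow_const 0 α (Or.inr hα0.le))
    simpa [Real.zero_rpow hα0.ne'] using this.tendsto
  exact h2.comp h1

noncomputable def Mv (f : ℝ → ℝ) (t : ℝ) : ℂ :=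
  ∫ x in Ioi (0:ℝ), (f x : ℂ) * (x:ℂ) ^ ((t:ℂ) * Complex.I)

theorem fbound (f : ℝ → ℝ) (α C : ℝ) (hα0 : 0 < α) (hα1 : α ≤ 1) (hC : 0 ≤ C)
    (hsupp : ∀ x, x ∉ Set.Icc (0:ℝ) 1 → f x = 0)
    (hHolder : ∀ x y : ℝ, |f x - f y| ≤ C * |x - y| ^ α) :
    ∀ x, |f x| ≤ 2 * C := by
  intro x
  by_cases hx : x ∈ Set.Icc (0:ℝ) 1
  · have h2 : f 2 = 0 := hsupp 2 (by norm_num)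
    have := hHolder x 2
    rw [h2, sub_zero] at this
    refine this.trans ?_
    have hab : |x - 2| ≤ 2 := by
      rw [abs_le]; constructor <;> [linarith [hx.1]; linarith [hx.2]]
    have h1 : |x - 2| ^ α ≤ 2 ^ α :=
      Real.rpow_le_rpow (abs_nonneg _) hab hα0.le
    have h2' : (2:ℝ) ^ α ≤ 2 := by
      calc (2:ℝ) ^ α ≤ 2 ^ (1:ℝ) := Real.rpow_le_rpow_of_exponent_le (by norm_num) hα1
      _ = 2 := Real.rpow_one 2
    calc C * |x - 2| ^ α ≤ C * 2 := by nlinarith [h1.trans h2']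
    _ = 2 * C := by ring
  · rw [hsupp x hx, abs_zero]; positivity

theorem fint (f : ℝ → ℝ) (hfc : Continuous f)
    (hsupp : ∀ x, x ∉ Set.Icc (0:ℝ) 1 → f x = 0) : Integrable f := by
  exact hfc.integrable_of_hasCompactSupport (HasCompactSupport.intro isCompact_Icc hsupp)

theorem fint1 (f : ℝ → ℝ) (hsupp : ∀ x, x ∉ Set.Icc (0:ℝ) 1 → f x = 0)
    (hprob : ∫ x, f x = 1) : ∫ x in Ioi (0:ℝ), f x = 1 := by
  rw [← MeasureTheory.integral_Ici_eq_integral_Ioi, ← hprob]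
  apply setIntegral_eq_integral_of_forall_compl_eq_zero
  intro x hx
  exact hsupp x (fun h => hx h.1)

theorem cpow_abs_one {x t : ℝ} (hx : 0 < x) :
    ‖(x:ℂ) ^ ((t:ℂ) * Complex.I)‖ = 1 := by
  rw [Complex.norm_cpow_eq_rpow_re_of_pos hx]
  simp

theorem cpow_cont (t : ℝ) :
    ContinuousOn (fun x : ℝ => (x:ℂ) ^ ((t:ℂ) * Complex.I)) (Ioi 0) := by
  intro x hx
  apply ContinuousAt.continuousWithinAt
  exact (continuousAt_cpow_const (a := (x:ℂ)) (Or.inl (by simpa using hx))).comp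
    Complex.continuous_ofReal.continuousAt

theorem Mv_integrable (f : ℝ → ℝ) (hfc : Continuous f)
    (hfi' : Integrable f) (t : ℝ) :
    IntegrableOn (fun x : ℝ => (f x : ℂ) * (x:ℂ) ^ ((t:ℂ) * Complex.I)) (Ioi 0) := by
  have hfi := hfi'.integrableOn (s := Ioi 0)
  apply Integrable.mono (hfi.norm) ?_ ?_
  · exact ((Complex.continuous_ofReal.comp hfc).continuousOn.mul (cpow_cont t)).aestronglyMeasurable
      measurableSet_Ioi
  · filter_upwards [ae_restrict_mem measurableSet_Ioi] with x hx
    rw [norm_mul, cpow_abs_one hx, mul_one]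
    simp

theorem Mv_le_one (f : ℝ → ℝ) (hfc : Continuous f) (hnn : ∀ x, 0 ≤ f x)
    (hsupp : ∀ x, x ∉ Set.Icc (0:ℝ) 1 → f x = 0) (hprob : ∫ x, f x = 1) (t : ℝ) :
    ‖Mv f t‖ ≤ 1 := by
  rw [Mv]
  calc ‖∫ x in Ioi (0:ℝ), (f x : ℂ) * (x:ℂ) ^ ((t:ℂ) * Complex.I)‖
      ≤ ∫ x in Ioi (0:ℝ), ‖(f x : ℂ) * (x:ℂ) ^ ((t:ℂ) * Complex.I)‖ :=
        norm_integral_le_integral_norm _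
    _ = ∫ x in Ioi (0:ℝ), f x := by
        apply setIntegral_congr_ae measurableSet_Ioi
        filter_upwards with x hx
        rw [norm_mul, cpow_abs_one hx, mul_one,
          Complex.norm_real, Real.norm_eq_abs, _root_.abs_of_nonneg (hnn x)]
    _ = 1 := fint1 f hsupp hprob

theorem cpow_mul_pos {r x t : ℝ} (hr : 0 < r) (hx : 0 < x) (hrt : t * Real.log r = Real.pi) :
    ((r*x : ℝ):ℂ) ^ ((t:ℂ) * Complex.I) = -((x:ℂ) ^ ((t:ℂ) * Complex.I)) := by
  have hrx : (0:ℝ) < r * x := mul_pos hr hx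
  rw [Complex.cpow_def_of_ne_zero (by exact_mod_cast hrx.ne'),
    Complex.cpow_def_of_ne_zero (by exact_mod_cast hx.ne'),
    ← Complex.ofReal_log hrx.le, ← Complex.ofReal_log hx.le,
    Real.log_mul hr.ne' hx.ne']
  push_cast
  rw [add_mul, Complex.exp_add]
  have : (Real.log r : ℂ) * ((t:ℂ) * Complex.I) = (Real.pi : ℂ) * Complex.I := by
    rw [← hrt]; push_cast; ring
  rw [this, Complex.exp_pi_mul_I, neg_one_mul]

theorem Mv_shift (f : ℝ → ℝ) (hfc : Continuous f) (hfi : Integrable f)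
    {t : ℝ} (ht : t ≠ 0) :
    (2 : ℂ) * Mv f t =
      ∫ x in Ioi (0:ℝ), ((f x - Real.exp (Real.pi / t) * f (Real.exp (Real.pi / t) * x) : ℝ):ℂ)
        * (x:ℂ) ^ ((t:ℂ) * Complex.I) := by
  set r := Real.exp (Real.pi / t) with hrdef
  have hr : 0 < r := Real.exp_pos _
  have hrt : t * Real.log r = Real.pi := by
    rw [hrdef, Real.log_exp]; field_simp
  have hcov := integral_comp_mul_left_Ioi
    (fun y : ℝ => (f y : ℂ) * (y:ℂ) ^ ((t:ℂ) * Complex.I)) 0 hr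
  simp only [mul_zero] at hcov
  -- hcov : ∫ x in Ioi 0, f (r*x) * (r*x)^(tI) = r⁻¹ • Mv f t
  have h2 : ∫ x in Ioi (0:ℝ), (f (r*x) : ℂ) * ((r*x : ℝ):ℂ) ^ ((t:ℂ) * Complex.I)
      = -(∫ x in Ioi (0:ℝ), (f (r*x) : ℂ) * (x:ℂ) ^ ((t:ℂ) * Complex.I)) := by
    rw [← integral_neg]
    apply setIntegral_congr_ae measurableSet_Ioi
    filter_upwards with x hx
    rw [cpow_mul_pos hr hx hrt]
    ring
  have hint1 := Mv_integrable f hfc hfi t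
  have hint2 : IntegrableOn (fun x : ℝ => (f (r*x) : ℂ) * (x:ℂ) ^ ((t:ℂ) * Complex.I)) (Ioi 0) :=
    Mv_integrable (fun x => f (r*x)) (hfc.comp (continuous_const.mul continuous_id))
      (hfi.comp_mul_left' hr.ne') t
  have hMv : Mv f t = -(r • ∫ x in Ioi (0:ℝ), (f (r*x) : ℂ) * (x:ℂ) ^ ((t:ℂ) * Complex.I)) := by
    have h3 : Mv f t = r • ∫ x in Ioi (0:ℝ), (f (r*x) : ℂ) * ((r*x : ℝ):ℂ) ^ ((t:ℂ) * Complex.I) := by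
      rw [hcov, smul_smul, mul_inv_cancel₀ hr.ne', one_smul]; rfl
    rw [h3, h2, smul_neg]
  have h4 : (2:ℂ) * Mv f t = Mv f t + Mv f t := by ring
  rw [h4]
  nth_rewrite 2 [hMv]
  rw [Mv, ← sub_eq_add_neg]
  have h5 : r • ∫ x in Ioi (0:ℝ), (f (r*x) : ℂ) * (x:ℂ) ^ ((t:ℂ) * Complex.I)
      = ∫ x in Ioi (0:ℝ), r • ((f (r*x) : ℂ) * (x:ℂ) ^ ((t:ℂ) * Complex.I)) :=
    (integral_smul r _).symm
  have hint2' : IntegrableOn (fun x : ℝ => r • ((f (r*x) : ℂ) * (x:ℂ) ^ ((t:ℂ) * Complex.I)))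
      (Ioi 0) := by
    have := hint2.smul r
    simpa [Pi.smul_def, IntegrableOn] using this
  rw [h5, ← integral_sub hint1 hint2']
  apply setIntegral_congr_ae measurableSet_Ioi
  filter_upwards with x hx
  rw [Complex.real_smul]
  push_cast
  ring

theorem Mv_decay (f : ℝ → ℝ) (α C : ℝ) (hα0 : 0 < α) (hα1 : α ≤ 1) (hC : 0 ≤ C)
    (hfc : Continuous f) (hfi : Integrable f)
    (hsupp : ∀ x, x ∉ Set.Icc (0:ℝ) 1 → f x = 0)
    (hHolder : ∀ x y : ℝ, |f x - f y| ≤ C * |x - y| ^ α)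
    {t : ℝ} (ht : t ≠ 0) :
    2 * ‖Mv f t‖ ≤
      (C * ((max 1 (Real.exp (Real.pi / t))⁻¹) * |1 - Real.exp (Real.pi / t)|) ^ α
        + 2 * C * |1 - Real.exp (Real.pi / t)|) * (max 1 (Real.exp (Real.pi / t))⁻¹) := by
  set r := Real.exp (Real.pi / t) with hrdef
  have hr : 0 < r := Real.exp_pos _
  set m := max 1 r⁻¹ with hmdef
  have hm1 : (1:ℝ) ≤ m := le_max_left _ _
  have hm0 : (0:ℝ) < m := by linarith
  have hmr : r⁻¹ ≤ m := le_max_right _ _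
  set D := C * (m * |1 - r|) ^ α + 2 * C * |1 - r| with hDdef
  have hD0 : 0 ≤ D := by positivity
  have hfb := fbound f α C hα0 hα1 hC hsupp hHolder
  have key : (2:ℝ) * ‖Mv f t‖ = ‖(2:ℂ) * Mv f t‖ := by
    rw [norm_mul]; norm_num
  rw [key, Mv_shift f hfc hfi ht]
  have step1 : ‖∫ x in Ioi (0:ℝ), ((f x - r * f (r*x) : ℝ):ℂ) * (x:ℂ) ^ ((t:ℂ) * Complex.I)‖
      ≤ ∫ x in Ioi (0:ℝ), |f x - r * f (r*x)| := by
    refine (norm_integral_le_integral_norm _).trans (le_of_eq ?_)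
    apply setIntegral_congr_ae measurableSet_Ioi
    filter_upwards with x hx
    rw [norm_mul, cpow_abs_one hx, mul_one, Complex.norm_real,
      Real.norm_eq_abs]
  refine step1.trans ?_
  have hsplit : Ioi (0:ℝ) = Ioc 0 m ∪ Ioi m := (Set.Ioc_union_Ioi_eq_Ioi hm0.le).symm
  rw [hsplit, integral_union_eq_left_of_forall measurableSet_Ioi ?_]
  · -- bound on Ioc 0 m
    have hcont : Continuous (fun x : ℝ => |f x - r * f (r*x)|) :=
      (hfc.sub (continuous_const.mul (hfc.comp (continuous_const.mul continuous_id)))).abs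
    have hIoc : ∫ x in Ioc (0:ℝ) m, |f x - r * f (r*x)| ≤ ∫ _x in Ioc (0:ℝ) m, D := by
      apply setIntegral_mono_on (hcont.integrableOn_Ioc) (integrableOn_const ?_)
        measurableSet_Ioc
      · intro x hx
        have hxm : x ≤ m := hx.2
        have hx0 : 0 < x := hx.1
        have tri : |f x - r * f (r*x)| ≤ |f x - f (r*x)| + |1 - r| * |f (r*x)| := by
          have : f x - r * f (r*x) = (f x - f (r*x)) + (1 - r) * f (r*x) := by ring
          rw [this]
          refine (abs_add_le _ _).trans ?_
          rw [abs_mul]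
        refine tri.trans ?_
        have h1 : |f x - f (r*x)| ≤ C * (m * |1 - r|) ^ α := by
          refine (hHolder x (r*x)).trans ?_
          have : |x - r*x| ≤ m * |1 - r| := by
            have : |x - r*x| = x * |1 - r| := by
              rw [show x - r*x = x * (1 - r) by ring, abs_mul, abs_of_pos hx0]
            rw [this]
            exact mul_le_mul_of_nonneg_right hxm (abs_nonneg _)
          exact mul_le_mul_of_nonneg_left
            (Real.rpow_le_rpow (abs_nonneg _) this hα0.le) hC
        have h2 : |1 - r| * |f (r*x)| ≤ |1 - r| * (2*C) :=
          mul_le_mul_of_nonneg_left (hfb _) (abs_nonneg _)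
        rw [hDdef]; nlinarith
      · rw [Real.volume_Ioc]; exact ENNReal.ofReal_ne_top
    refine hIoc.trans (le_of_eq ?_)
    rw [setIntegral_const, Measure.real, Real.volume_Ioc, sub_zero, ENNReal.toReal_ofReal hm0.le, smul_eq_mul,
      mul_comm]
  · -- vanishing on Ioi m
    intro x hx
    have hx1 : (1:ℝ) < x := lt_of_le_of_lt hm1 hx
    have hfx : f x = 0 := hsupp x (fun h => absurd h.2 (not_le.2 hx1))
    have hrx : (1:ℝ) < r * x := by
      have : r⁻¹ < x := lt_of_le_of_lt hmr hx
      calc (1:ℝ) = r * r⁻¹ := (mul_inv_cancel₀ hr.ne').symm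
      _ < r * x := by exact (mul_lt_mul_iff_right₀ hr).2 this
    have hfrx : f (r*x) = 0 := hsupp _ (fun h => absurd h.2 (not_le.2 hrx))
    rw [hfx, hfrx]; simp

theorem exp_sub_one_bound (s : ℝ) : |Real.exp s - 1| ≤ |s| * Real.exp |s| := by
  rcases le_or_gt 0 s with hs | hs
  · rw [_root_.abs_of_nonneg hs, _root_.abs_of_nonneg (by linarith [Real.one_le_exp hs])]
    have h1 : 1 - s ≤ Real.exp (-s) := by have := Real.add_one_le_exp (-s); linarith
    have h2 : Real.exp (-s) = (Real.exp s)⁻¹ := Real.exp_neg s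
    have h3 : 0 < Real.exp s := Real.exp_pos s
    rw [h2] at h1
    have := mul_le_mul_of_nonneg_left h1 h3.le
    rw [mul_inv_cancel₀ h3.ne'] at this
    nlinarith
  · rw [_root_.abs_of_neg hs, abs_of_nonpos (by linarith [Real.exp_lt_one_iff.2 hs])]
    have h1 : 1 + s ≤ Real.exp s := by have := Real.add_one_le_exp s; linarith
    have h2 : 1 ≤ Real.exp (-s) := Real.one_le_exp (by linarith)
    nlinarith

theorem Mv_decay_int (f : ℝ → ℝ) (α C : ℝ) (hα0 : 0 < α) (hα1 : α ≤ 1) (hC : 0 ≤ C)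
    (hfc : Continuous f) (hfi : Integrable f)
    (hsupp : ∀ x, x ∉ Set.Icc (0:ℝ) 1 → f x = 0)
    (hHolder : ∀ x y : ℝ, |f x - f y| ≤ C * |x - y| ^ α)
    (B : ℝ) (hB : 1 < B) :
    ∃ K : ℝ, 0 ≤ K ∧ ∀ ℓ : ℤ, ℓ ≠ 0 →
      ‖Mv f (-(2 * Real.pi * ℓ / Real.log B))‖ ≤ K * ((|ℓ| : ℤ) : ℝ) ^ (-α) := by
  have hlogB : 0 < Real.log B := Real.log_pos hB
  set Λ : ℝ := Real.log B / 2 with hΛdef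
  have hΛ : 0 < Λ := by positivity
  set E : ℝ := Real.exp Λ with hEdef
  have hE1 : 1 ≤ E := Real.one_le_exp hΛ.le
  have hE0 : 0 < E := by linarith
  refine ⟨(C * (E^2*Λ) ^ α + 2*C*(Λ*E)) * E / 2, by positivity, ?_⟩
  intro ℓ hℓ
  set t : ℝ := -(2 * Real.pi * ℓ / Real.log B) with htdef
  have hπ : (0:ℝ) < Real.pi := Real.pi_pos
  have hℓR : ((ℓ:ℝ)) ≠ 0 := Int.cast_ne_zero.2 hℓ
  have ht : t ≠ 0 := by
    rw [htdef]
    simp only [neg_ne_zero, div_ne_zero_iff]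
    exact ⟨by positivity, hlogB.ne'⟩
  set q : ℝ := ((|ℓ| : ℤ) : ℝ) with hqdef
  have hq1 : (1:ℝ) ≤ q := by
    rw [hqdef]; exact_mod_cast Int.one_le_abs hℓ
  have hq0 : (0:ℝ) < q := by linarith
  have hu : Real.pi / t = -(Real.log B / (2 * ℓ)) := by
    rw [htdef]; field_simp
  have huabs : |Real.pi / t| = Λ / q := by
    rw [hu, abs_neg, abs_div, _root_.abs_of_pos hlogB, abs_mul,
      show |(2:ℝ)| = 2 from _root_.abs_of_pos two_pos, hΛdef, hqdef]
    push_cast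
    rw [div_div]
  have huΛ : |Real.pi / t| ≤ Λ := by
    rw [huabs]
    calc Λ / q ≤ Λ / 1 := by apply div_le_div_of_nonneg_left hΛ.le <;> linarith
    _ = Λ := div_one Λ
  set r : ℝ := Real.exp (Real.pi / t) with hrdef
  have hr0 : 0 < r := Real.exp_pos _
  set m : ℝ := max 1 r⁻¹ with hmdef
  have hm1 : (1:ℝ) ≤ m := le_max_left _ _
  have hm0 : (0:ℝ) < m := by linarith
  have hmE : m ≤ E := by
    rw [hmdef]
    apply max_le hE1
    rw [hrdef, ← Real.exp_neg]
    apply Real.exp_le_exp.2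
    calc -(Real.pi / t) ≤ |Real.pi / t| := neg_le_abs _
    _ ≤ Λ := huΛ
  have h1r : |1 - r| ≤ Λ * E / q := by
    rw [abs_sub_comm]
    refine (exp_sub_one_bound _).trans ?_
    rw [huabs]
    have hexp : Real.exp (Λ / q) ≤ E := by
      apply Real.exp_le_exp.2
      rw [← huabs]; exact huΛ
    calc Λ / q * Real.exp (Λ / q) ≤ Λ / q * E :=
      mul_le_mul_of_nonneg_left hexp (by positivity)
    _ = Λ * E / q := by ring
  have h1r0 : 0 ≤ |1 - r| := abs_nonneg _
  have hqa : q⁻¹ ≤ q ^ (-α) := by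
    rw [← Real.rpow_neg_one q]
    exact Real.rpow_le_rpow_of_exponent_le hq1 (by linarith)
  have hqa0 : (0:ℝ) ≤ q ^ (-α) := Real.rpow_nonneg hq0.le _
  -- main bounds
  have h1 : (m * |1 - r|) ^ α ≤ (E^2*Λ) ^ α * q ^ (-α) := by
    have hb : m * |1 - r| ≤ E^2*Λ/q := by
      calc m * |1 - r| ≤ E * (Λ * E / q) :=
        mul_le_mul hmE h1r h1r0 hE0.le
      _ = E^2*Λ/q := by ring
    calc (m * |1 - r|) ^ α ≤ (E^2*Λ/q) ^ α :=
      Real.rpow_le_rpow (by positivity) hb hα0.le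
    _ = (E^2*Λ) ^ α / q ^ α := Real.div_rpow (by positivity) hq0.le α
    _ = (E^2*Λ) ^ α * q ^ (-α) := by
        rw [Real.rpow_neg hq0.le, div_eq_mul_inv]
  have h2 : |1 - r| ≤ Λ * E * q ^ (-α) := by
    refine h1r.trans ?_
    calc Λ * E / q = Λ * E * q⁻¹ := by ring
    _ ≤ Λ * E * q ^ (-α) := mul_le_mul_of_nonneg_left hqa (by positivity)
  have hdecay := Mv_decay f α C hα0 hα1 hC hfc hfi hsupp hHolder ht
  rw [← hrdef, ← hmdef] at hdecay
  have final : (C * (m * |1 - r|) ^ α + 2 * C * |1 - r|) * m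
      ≤ (C * ((E^2*Λ) ^ α * q ^ (-α)) + 2*C*(Λ*E* q ^ (-α))) * E := by
    apply mul_le_mul _ hmE hm0.le (by positivity)
    exact add_le_add (mul_le_mul_of_nonneg_left h1 hC)
      (mul_le_mul_of_nonneg_left h2 (by positivity))
  have hrw : (C * ((E^2*Λ) ^ α * q ^ (-α)) + 2*C*(Λ*E* q ^ (-α))) * E
      = 2 * ((C * (E^2*Λ) ^ α + 2*C*(Λ*E)) * E / 2 * q ^ (-α)) := by ring
  rw [hrw] at final
  have := hdecay.trans final
  linarith

theorem countable_cpow_eq {t : ℝ} (ht : t ≠ 0) (c : ℂ) :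
    Set.Countable {x : ℝ | x ∈ Ioi (0:ℝ) ∧ (x:ℂ) ^ ((t:ℂ) * Complex.I) = c} := by
  set S := {x : ℝ | x ∈ Ioi (0:ℝ) ∧ (x:ℂ) ^ ((t:ℂ) * Complex.I) = c} with hS
  have hexp : ∀ x : ℝ, 0 < x →
      (x:ℂ) ^ ((t:ℂ) * Complex.I) = Complex.exp ((Real.log x : ℂ) * ((t:ℂ) * Complex.I)) := by
    intro x hx
    rw [Complex.cpow_def_of_ne_zero (by exact_mod_cast hx.ne'), Complex.ofReal_log hx.le]
  rcases Set.eq_empty_or_nonempty S with h | ⟨y, hy0, hyc⟩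
  · rw [h]; exact Set.countable_empty
  apply Set.Countable.mono ?_
    (Set.countable_range (fun n : ℤ => Real.exp (Real.log y + n * (2 * Real.pi) / t)))
  rintro x ⟨hx0, hxc⟩
  have hx0' : (0:ℝ) < x := hx0
  have hy0' : (0:ℝ) < y := hy0
  have hdiv : Complex.exp (((Real.log x - Real.log y : ℝ) : ℂ) * ((t:ℂ) * Complex.I)) = 1 := by
    have : (((Real.log x - Real.log y : ℝ) : ℂ) * ((t:ℂ) * Complex.I))
        = (Real.log x : ℂ) * ((t:ℂ) * Complex.I) - (Real.log y : ℂ) * ((t:ℂ) * Complex.I) := by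
      push_cast; ring
    have hc0 : c ≠ 0 := by
      rw [← hxc, hexp x hx0']; exact Complex.exp_ne_zero _
    rw [this, Complex.exp_sub, ← hexp x hx0', ← hexp y hy0', hxc, hyc, div_self hc0]
  rw [Complex.exp_eq_one_iff] at hdiv
  obtain ⟨n, hn⟩ := hdiv
  have him := congrArg Complex.im hn
  simp [Complex.mul_im, Complex.mul_re] at him
  -- him : (log x - log y) * t = n * (2π)  (in some form)
  refine ⟨n, ?_⟩
  have hlog : Real.log x = Real.log y + n * (2 * Real.pi) / t := by
    field_simp
    nlinarith [him]
  show Real.exp (Real.log y + n * (2 * Real.pi) / t) = x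
  rw [← hlog, Real.exp_log hx0']

theorem re_eq_one_unit {w : ℂ} (hw : ‖w‖ = 1) (hre : w.re = 1) : w = 1 := by
  have h1 : Complex.normSq w = 1 := by
    rw [← Complex.sq_norm, hw]; norm_num
  rw [Complex.normSq_apply, hre] at h1
  have him : w.im = 0 := by nlinarith [sq_nonneg w.im]
  exact Complex.ext hre him

theorem exists_pos_interior (f : ℝ → ℝ) (hnn : ∀ x, 0 ≤ f x)
    (hsupp : ∀ x, x ∉ Set.Icc (0:ℝ) 1 → f x = 0) (hprob : ∫ x, f x = 1) :
    ∃ x0 ∈ Ioo (0:ℝ) 1, 0 < f x0 := by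
  by_contra h
  push_neg at h
  have hcnt : volume ({0,1} : Set ℝ) = 0 :=
    (Set.Finite.insert 0 (Set.finite_singleton 1)).measure_zero volume
  have hae : f =ᵐ[volume] 0 := by
    filter_upwards [measure_eq_zero_iff_ae_notMem.1 hcnt] with x hx
    by_cases hxI : x ∈ Set.Icc (0:ℝ) 1
    · have hx0 : x ≠ 0 := fun h0 => hx (by simp [h0])
      have hx1 : x ≠ 1 := fun h1 => hx (by simp [h1])
      have hxIoo : x ∈ Ioo (0:ℝ) 1 :=
        ⟨lt_of_le_of_ne hxI.1 (Ne.symm hx0), lt_of_le_of_ne hxI.2 hx1⟩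
      exact le_antisymm (h x hxIoo) (hnn x)
    · exact hsupp x hxI
  rw [integral_congr_ae hae] at hprob
  simp at hprob

theorem Mv_lt_one (f : ℝ → ℝ) (hfc : Continuous f) (hfi : Integrable f)
    (hnn : ∀ x, 0 ≤ f x) (hsupp : ∀ x, x ∉ Set.Icc (0:ℝ) 1 → f x = 0)
    (hprob : ∫ x, f x = 1) {t : ℝ} (ht : t ≠ 0) :
    ‖Mv f t‖ < 1 := by
  by_cases hz : Mv f t = 0
  · rw [hz]; norm_num
  set J := Mv f t with hJdef
  have hJn : 0 < ‖J‖ := by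
    exact norm_pos_iff.mpr hz
  set cb : ℂ := (starRingEnd ℂ) J / (‖J‖ : ℂ) with hcbdef
  have habs_cb : ‖cb‖ = 1 := by
    rw [hcbdef, norm_div, Complex.norm_conj, Complex.norm_real, Real.norm_eq_abs,
      _root_.abs_of_pos hJn, div_self hJn.ne']
  have hcbJ : cb * J = (‖J‖ : ℂ) := by
    rw [hcbdef, div_mul_eq_mul_div, mul_comm ((starRingEnd ℂ) J) J, Complex.mul_conj,
      Complex.normSq_eq_norm_sq]
    push_cast
    rw [sq, mul_div_assoc, div_self (by exact_mod_cast hJn.ne'), mul_one]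
  set w : ℝ → ℂ := fun x => (x:ℂ) ^ ((t:ℂ) * Complex.I) with hwdef
  have hint : IntegrableOn (fun x : ℝ => (f x : ℂ) * w x) (Ioi 0) := Mv_integrable f hfc hfi t
  have hint2 : IntegrableOn (fun x : ℝ => cb * ((f x : ℂ) * w x)) (Ioi 0) := hint.const_mul cb
  have hre_int : IntegrableOn (fun x : ℝ => (cb * ((f x : ℂ) * w x)).re) (Ioi 0) := by
    simpa [IntegrableOn] using hint2.re
  have key : (‖J‖ : ℝ) = ∫ x in Ioi (0:ℝ), (cb * ((f x:ℂ) * w x)).re := by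
    have h1 : ∫ x in Ioi (0:ℝ), cb * ((f x:ℂ) * w x) = cb * J := by
      rw [hJdef, Mv, ← integral_const_mul]
    have h2 := integral_re hint2
    rw [h1, hcbJ] at h2
    simpa using h2.symm
  set G : ℝ → ℝ := fun x => f x - (cb * ((f x:ℂ) * w x)).re with hGdef
  have hGnn : ∀ x ∈ Ioi (0:ℝ), 0 ≤ G x := by
    intro x hx
    have h3 : (cb * ((f x:ℂ) * w x)).re ≤ f x := by
      refine (Complex.re_le_norm _).trans ?_
      rw [norm_mul, norm_mul, habs_cb, one_mul, Complex.norm_real, Real.norm_eq_abs,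
        _root_.abs_of_nonneg (hnn x), hwdef, cpow_abs_one hx, mul_one]
    simp only [hGdef, sub_nonneg]
    exact h3
  have hGint : IntegrableOn G (Ioi 0) := hfi.integrableOn.sub hre_int
  have hGeq : ∫ x in Ioi (0:ℝ), G x = 1 - ‖J‖ := by
    rw [hGdef]
    rw [integral_sub hfi.integrableOn hre_int, fint1 f hsupp hprob, ← key]
  have hpos : 0 < ∫ x in Ioi (0:ℝ), G x := by
    rw [setIntegral_pos_iff_support_of_nonneg_ae
      (by filter_upwards [ae_restrict_mem measurableSet_Ioi] with x hx using hGnn x hx) hGint]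
    set U := {y : ℝ | 0 < f y} ∩ Ioo 0 1 with hUdef
    have hUopen : IsOpen U := (isOpen_lt continuous_const hfc).inter isOpen_Ioo
    obtain ⟨x0, hx0I, hx0f⟩ := exists_pos_interior f hnn hsupp hprob
    have hUne : U.Nonempty := ⟨x0, hx0f, hx0I⟩
    set S := {x : ℝ | x ∈ Ioi (0:ℝ) ∧ (x:ℂ) ^ ((t:ℂ) * Complex.I) = (starRingEnd ℂ) cb}
      with hSdef
    have hSnull : volume S = 0 := (countable_cpow_eq ht _).measure_zero volume
    have hsub : U \ S ⊆ Function.support G ∩ Ioi 0 := by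
      rintro x ⟨⟨hfx, hxIoo⟩, hxS⟩
      have hx0 : x ∈ Ioi (0:ℝ) := hxIoo.1
      refine ⟨fun hGx => hxS ?_, hx0⟩
      have hfxpos : 0 < f x := hfx
      have hw1 : ‖cb * w x‖ = 1 := by
        rw [norm_mul, habs_cb, one_mul, hwdef, cpow_abs_one hx0]
      have hexp : (cb * ((f x:ℂ) * w x)).re = f x * (cb * w x).re := by
        rw [show cb * ((f x:ℂ) * w x) = (f x:ℂ) * (cb * w x) by ring]; rw [Complex.re_ofReal_mul]
      have hGx' : f x - f x * (cb * w x).re = 0 := by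
        rw [← hexp]
        simpa [hGdef] using hGx
      have hre : (cb * w x).re = 1 := by
        have h4 : f x * (cb * w x).re = f x * 1 := by linarith
        exact mul_left_cancel₀ hfxpos.ne' h4
      have hcw := re_eq_one_unit hw1 hre
      have hconj : (starRingEnd ℂ) cb * cb = 1 := by
        rw [mul_comm, Complex.mul_conj, Complex.normSq_eq_norm_sq, habs_cb]
        norm_num
      refine ⟨hx0, ?_⟩
      show w x = (starRingEnd ℂ) cb
      calc w x = ((starRingEnd ℂ) cb * cb) * w x := by rw [hconj, one_mul]
      _ = (starRingEnd ℂ) cb * (cb * w x) := by ring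
      _ = (starRingEnd ℂ) cb := by rw [hcw, mul_one]
    calc (0:ENNReal) < volume U := hUopen.measure_pos volume hUne
    _ = volume (U \ S) := (measure_diff_null hSnull).symm
    _ ≤ volume (Function.support G ∩ Ioi 0) := measure_mono hsub
  rw [hGeq] at hpos
  linarith

/-- For an `α`-Hölder continuous probability density supported on `[0,1]` and `B > 1`,
the sum over nonzero integers `ℓ` of `|Mf(1 - 2πiℓ/log B)|^n` tends to `0` as `n → ∞`. -/
theorem stmt_4 (f : ℝ → ℝ) (α C : ℝ) (hα0 : 0 < α) (hα1 : α ≤ 1) (hC : 0 ≤ C)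
    (hnn : ∀ x, 0 ≤ f x) (hsupp : ∀ x, x ∉ Set.Icc (0:ℝ) 1 → f x = 0)
    (hHolder : ∀ x y : ℝ, |f x - f y| ≤ C * |x - y| ^ α)
    (hprob : ∫ x, f x = 1)
    (B : ℝ) (hB : 1 < B) :
    Filter.Tendsto
      (fun n : ℕ => ∑' ℓ : {l : ℤ // l ≠ 0},
        (‖∫ x in Set.Ioi (0:ℝ), (f x : ℂ) *
          (x : ℂ) ^ (((1 : ℂ) - 2 * Real.pi * Complex.I * ((ℓ : ℤ) : ℂ) / (Real.log B : ℂ)) - 1)‖) ^ n)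
      Filter.atTop (nhds 0) := by
  have hfc : Continuous f := cont_of_holder f α C hα0 hHolder
  have hfi : Integrable f := fint f hfc hsupp
  have hlogB : 0 < Real.log B := Real.log_pos hB
  have hexp : ∀ ℓ : ℤ, ((1 : ℂ) - 2 * Real.pi * Complex.I * (ℓ : ℂ) / (Real.log B : ℂ)) - 1
      = ((-(2 * Real.pi * ℓ / Real.log B) : ℝ) : ℂ) * Complex.I := by
    intro ℓ; push_cast; ring
  have hMv_eq : ∀ ℓ : {l : ℤ // l ≠ 0},
      (∫ x in Set.Ioi (0:ℝ), (f x : ℂ) *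
        (x : ℂ) ^ (((1 : ℂ) - 2 * Real.pi * Complex.I * ((ℓ : ℤ) : ℂ) / (Real.log B : ℂ)) - 1))
      = Mv f (-(2 * Real.pi * (ℓ : ℤ) / Real.log B)) := by
    intro ℓ
    rw [Mv]
    simp only [hexp (ℓ : ℤ)]
  simp only [hMv_eq]
  set g : {l : ℤ // l ≠ 0} → ℝ :=
    fun ℓ => ‖Mv f (-(2 * Real.pi * (ℓ : ℤ) / Real.log B))‖ with hgdef
  have ht_ne : ∀ ℓ : ℤ, ℓ ≠ 0 → (-(2 * Real.pi * ℓ / Real.log B)) ≠ 0 := by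
    intro ℓ hℓ
    have hπ := Real.pi_pos
    have : ((ℓ:ℝ)) ≠ 0 := Int.cast_ne_zero.2 hℓ
    simp only [neg_ne_zero, div_ne_zero_iff]
    constructor
    · positivity
    · exact hlogB.ne'
  have hg_nn : ∀ ℓ, 0 ≤ g ℓ := fun ℓ => norm_nonneg _
  have hg_lt : ∀ ℓ, g ℓ < 1 := fun ℓ =>
    Mv_lt_one f hfc hfi hnn hsupp hprob (ht_ne ℓ.1 ℓ.2)
  obtain ⟨K, hK0, hKb⟩ := Mv_decay_int f α C hα0 hα1 hC hfc hfi hsupp hHolder B hB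
  obtain ⟨N, hN⟩ := exists_nat_gt (2 / α)
  have hNα : 1 < α * N := by
    have h2 : 2 / α * α = 2 := div_mul_cancel₀ 2 hα0.ne'
    nlinarith
  have hsum : Summable (fun ℓ : {l : ℤ // l ≠ 0} => g ℓ ^ N) := by
    have hsum0 : Summable (fun ℓ : {l : ℤ // l ≠ 0} => K ^ N * ((|ℓ.1| : ℤ) : ℝ) ^ (-(α * N))) := by
      apply Summable.mul_left
      have hs := Real.summable_abs_int_rpow hNα
      have hs2 := hs.subtype {l : ℤ | l ≠ 0}
      apply hs2.congr
      intro ℓ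
      push_cast
      rfl
    refine Summable.of_nonneg_of_le (fun ℓ => pow_nonneg (hg_nn ℓ) N) (fun ℓ => ?_) hsum0
    have h1 : g ℓ ^ N ≤ (K * ((|ℓ.1| : ℤ) : ℝ) ^ (-α)) ^ N :=
      pow_le_pow_left₀ (hg_nn ℓ) (hKb ℓ.1 ℓ.2) N
    refine h1.trans (le_of_eq ?_)
    have hq0 : (0:ℝ) < ((|ℓ.1| : ℤ) : ℝ) := by
      exact_mod_cast abs_pos.2 ℓ.2
    rw [mul_pow, ← Real.rpow_natCast (((|ℓ.1| : ℤ) : ℝ) ^ (-α)) N,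
      ← Real.rpow_mul hq0.le]
    ring_nf
  apply Filter.Tendsto.congr' (f₁ := fun n => ∑' ℓ : {l : ℤ // l ≠ 0}, g ℓ ^ n) rfl.eventuallyEq ?_
  have := tendsto_tsum_of_dominated_convergence (𝓕 := Filter.atTop (α := ℕ))
    (f := fun n (ℓ : {l : ℤ // l ≠ 0}) => g ℓ ^ n) (g := fun _ => (0:ℝ))
    (bound := fun ℓ => g ℓ ^ N) hsum
    (fun ℓ => tendsto_pow_atTop_nhds_zero_of_lt_one (hg_nn ℓ) (hg_lt ℓ)) ?_
  · simpa [tsum_zero] using this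
  · filter_upwards [Filter.eventually_ge_atTop N] with n hn ℓ
    rw [Real.norm_eq_abs, _root_.abs_of_nonneg (pow_nonneg (hg_nn ℓ) n)]
    exact pow_le_pow_of_le_one (hg_nn ℓ) (hg_lt ℓ).le hn
end

section
/- Define M_L recursively for odd positive integers L by M_1 = 1 and, for odd L > 1, M_L = (2/(L-1)) ∑_{ℓ < L, ℓ odd} (1 + M_ℓ). Then M_L = 1 + 2 ∑_{0 < j < L, j even} 1/j for all odd L ≥ 1. -/
open scoped Classical

noncomputable def Hh (n : ℕ) : ℝ := ∑ k ∈ Finset.range n, (1 : ℝ) / (k + 1)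

lemma sumHh : ∀ n : ℕ, ∑ i ∈ Finset.range n, Hh i = n * Hh n - n := by
  intro n
  induction n with
  | zero => simp
  | succ m ih =>
      rw [Finset.sum_range_succ, ih]
      have : Hh (m + 1) = Hh m + 1 / (m + 1) := by
        simp [Hh, Finset.sum_range_succ]
      rw [this]
      have hm : ((m : ℝ) + 1) ≠ 0 := by positivity
      push_cast
      field_simp
      ring

lemma oddsum (f : ℕ → ℝ) : ∀ n : ℕ,
    ∑ ℓ ∈ (Finset.range (2 * n + 1)).filter (fun ℓ => Odd ℓ), f ℓ
      = ∑ i ∈ Finset.range n, f (2 * i + 1) := by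
  intro n
  induction n with
  | zero =>
      simp [Finset.filter_singleton, Finset.range_one]
  | succ m ih =>
      have h2 : 2 * (m + 1) + 1 = (2 * m + 1) + 1 + 1 := by ring
      rw [h2]
      rw [Finset.sum_filter] at *
      rw [Finset.sum_range_succ, Finset.sum_range_succ, ih, Finset.sum_range_succ]
      have ho : Odd (2 * m + 1) := ⟨m, by ring⟩
      have he : ¬ Odd (2 * m + 1 + 1) := by simp [Nat.even_add_one, parity_simps]
      simp [ho, he]

lemma evensum : ∀ n : ℕ,
    ∑ j ∈ (Finset.range (2 * n + 1)).filter (fun j => Even j ∧ 0 < j), (1 : ℝ) / j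
      = ∑ k ∈ Finset.range n, (1 : ℝ) / (2 * (k + 1)) := by
  intro n
  induction n with
  | zero =>
      norm_num [Finset.range_one, Finset.filter_singleton]
  | succ m ih =>
      have h2 : 2 * (m + 1) + 1 = (2 * m + 1) + 1 + 1 := by ring
      rw [h2]
      rw [Finset.sum_filter] at *
      rw [Finset.sum_range_succ, Finset.sum_range_succ, ih, Finset.sum_range_succ]
      have ho : ¬ (Even (2 * m + 1) ∧ 0 < 2 * m + 1) := by
        simp [parity_simps]
      have he : Even (2 * m + 1 + 1) ∧ 0 < 2 * m + 1 + 1 := by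
        constructor
        · exact ⟨m + 1, by ring⟩
        · omega
      simp only [ho, he, if_false, true_and, and_self, if_true, add_zero, if_neg, not_false_iff]
      norm_num
      push_cast
      rw [inv_eq_iff_eq_inv]
      field_simp

/-- Closed form for the expected fragment count in the odd-stick-breaking process:
if `M 1 = 1` and `M L = (2/(L-1)) ∑_{ℓ<L, ℓ odd} (1 + M ℓ)` for odd `L > 1`, then
`M L = 1 + 2 ∑_{0<j<L, j even} 1/j` for all odd `L`. -/
theorem stmt_6 (M : ℕ → ℝ) (h1 : M 1 = 1)
    (hrec : ∀ L, Odd L → 1 < L →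
      M L = 2 / ((L : ℝ) - 1) * ∑ ℓ ∈ (Finset.range L).filter (fun ℓ => Odd ℓ), (1 + M ℓ)) :
    ∀ L, Odd L →
      M L = 1 + 2 * ∑ j ∈ (Finset.range L).filter (fun j => Even j ∧ 0 < j), (1 : ℝ) / j := by
  have key : ∀ n : ℕ, M (2 * n + 1) = 1 + Hh n := by
    intro n
    induction n using Nat.strong_induction_on with
    | _ n ih =>
      cases n with
      | zero => simpa [Hh] using h1
      | succ m =>
        have hodd : Odd (2 * (m + 1) + 1) := ⟨m + 1, by ring⟩
        have hgt : 1 < 2 * (m + 1) + 1 := by omega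
        rw [hrec _ hodd hgt, oddsum]
        have hsum : ∑ i ∈ Finset.range (m + 1), (1 + M (2 * i + 1))
            = ∑ i ∈ Finset.range (m + 1), (2 + Hh i) := by
          apply Finset.sum_congr rfl
          intro i hi
          rw [ih i (by simpa using Finset.mem_range.mp hi)]
          ring
        rw [hsum, Finset.sum_add_distrib, sumHh, Finset.sum_const, Finset.card_range]
        have hm : ((m : ℝ) + 1) ≠ 0 := by positivity
        push_cast
        field_simp
        ring
  intro L hL
  obtain ⟨n, rfl⟩ := hL
  have h2 : 2 * n + 1 = 2 * n + 1 := rfl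
  rw [key n, evensum]
  have : (2 : ℝ) * ∑ k ∈ Finset.range n, (1 : ℝ) / (2 * (k + 1))
      = ∑ k ∈ Finset.range n, (1 : ℝ) / (k + 1) := by
    rw [Finset.mul_sum]
    apply Finset.sum_congr rfl
    intro k _
    have : ((k : ℝ) + 1) ≠ 0 := by positivity
    field_simp
  rw [this]
  rfl
end

section
/- Fix a modulus n ≥ 2 and a stopping set 𝔖 ⊆ ℤ₊ that is the union of {1} and exactly n/2 residue classes modulo n (n even). Define E_L = E[M_L] where M_L is the expected total number of dead sticks from breaking a stick of length L uniformly at an integer point in {1,...,L-1}, children dying when their length lies in 𝔖 (so M_L = 1 for L ∈ 𝔖 and E_L = (2/(L-1)) ∑_{ℓ=1}^{L-1} E_ℓ for L ∉ 𝔖). Then E_L ≤ 6n² log L for all L ∉ 𝔖 with L > 1. -/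
open Finset

-- Gauss sum over Icc 1 m, real version
private lemma gauss_icc_real (m : ℕ) : ∑ ℓ ∈ Finset.Icc 1 m, (ℓ:ℝ) = m*(m+1)/2 := by
  induction m with
  | zero => simp
  | succ m ih =>
    rw [Finset.sum_Icc_succ_top (by omega : 1 ≤ m + 1), ih]
    push_cast
    ring

-- count of a residue class in [1, m] : upper bound
private lemma count_res_upper (n r m : ℕ) :
    ((Finset.Icc 1 m).filter (fun ℓ => ℓ % n = r)).card ≤ m / n + 1 := by
  have h : ((Finset.Icc 1 m).filter (fun ℓ => ℓ % n = r)).card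
      ≤ (Finset.range (m / n + 1)).card := by
    apply Finset.card_le_card_of_injOn (fun ℓ => ℓ / n)
    · intro ℓ hℓ
      simp only [Finset.mem_coe, Finset.mem_filter, Finset.mem_Icc] at hℓ
      simp only [Finset.mem_coe, Finset.mem_range]
      exact Nat.lt_succ_of_le (Nat.div_le_div_right hℓ.1.2)
    · intro a ha b hb hab
      simp only [Finset.coe_filter, Set.mem_setOf_eq, Finset.mem_Icc] at ha hb
      have h1 : n * (a / n) + a % n = a := Nat.div_add_mod a n
      have h2 : n * (b / n) + b % n = b := Nat.div_add_mod b n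
      simp only at hab
      rw [hab] at h1
      rw [ha.2, ← hb.2] at h1
      omega
  simpa using h

-- count of a residue class in [1, m] : lower bound
private lemma count_res_lower (n r m : ℕ) (hn : 0 < n) (hr : r < n) :
    m / n ≤ ((Finset.Icc 1 m).filter (fun ℓ => ℓ % n = r)).card := by
  have h : (Finset.range (m / n)).card
      ≤ ((Finset.Icc 1 m).filter (fun ℓ => ℓ % n = r)).card := by
    apply Finset.card_le_card_of_injOn (fun j => j * n + (if r = 0 then n else r))
    · intro j hj
      simp only [Finset.mem_coe, Finset.mem_range] at hj
      have hjn : j * n + n ≤ m := by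
        have h1 : (j+1) * n ≤ (m / n) * n := Nat.mul_le_mul_right n (by omega)
        have h2 : (m / n) * n ≤ m := Nat.div_mul_le_self m n
        have h3 : (j+1) * n = j * n + n := by ring
        omega
      simp only [Finset.mem_coe, Finset.mem_filter, Finset.mem_Icc]
      refine ⟨⟨by split <;> omega, by split <;> omega⟩, ?_⟩
      split
      · rename_i h0
        have h4 : j * n + n = (j+1) * n := by ring
        rw [h4, Nat.mul_mod_left, h0]
      · rw [add_comm, Nat.add_mul_mod_self_right]
        exact Nat.mod_eq_of_lt hr
    · intro a ha b hb hab
      simp only at hab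
      exact Nat.eq_of_mul_eq_mul_right hn (by omega : a * n = b * n)
  simpa using h

private lemma sum_class_card (n : ℕ) (S : Finset ℕ) (m : ℕ) :
    ((Finset.Icc 1 m).filter (fun ℓ => ℓ % n ∈ S)).card
      = ∑ r ∈ S, ((Finset.Icc 1 m).filter (fun ℓ => ℓ % n = r)).card := by
  rw [← Finset.card_biUnion]
  · congr 1
    ext ℓ
    simp only [Finset.mem_biUnion, Finset.mem_filter, Finset.mem_Icc]
    constructor
    · rintro ⟨h1, h2⟩; exact ⟨ℓ % n, h2, h1, rfl⟩
    · rintro ⟨r, hr, h1, h2⟩; exact ⟨h1, h2 ▸ hr⟩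
  · intro r hr r' hr' hne'
    rw [Function.onFun, Finset.disjoint_left]
    rintro a ha ha'
    simp only [Finset.mem_filter] at ha ha'
    exact hne' (ha.2 ▸ ha'.2 ▸ rfl)


set_option maxHeartbeats 1000000 in
private lemma boot_lb (N x t Lr : ℝ) (hN2 : 2 ≤ N) (ht1 : 0.6931 ≤ t)
    (hx4 : 4*t ≤ x) (hcase : 3*N^2*(1+x) < Lr) : 3*N^2*(1+4*t) ≤ Lr := by
  nlinarith [mul_nonneg (mul_nonneg (by norm_num : (0:ℝ) ≤ 3) (sq_nonneg N))
    (sub_nonneg.mpr hx4)]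

set_option maxHeartbeats 1000000 in
private lemma boot_4N (N x t Lr : ℝ) (hN2 : 2 ≤ N) (ht1 : 0.6931 ≤ t)
    (hxt : t ≤ x) (hcase : 3*N^2*(1+x) < Lr) : 4*N^2 < Lr := by
  nlinarith [mul_nonneg (mul_nonneg (by norm_num : (0:ℝ) ≤ 3) (sq_nonneg N))
    (sub_nonneg.mpr hxt), sq_nonneg N]

set_option maxHeartbeats 1000000 in
private lemma key_num (N t Lr B Tr Mr Kr : ℝ) (hN2 : 2 ≤ N)
    (ht1 : 0.6931 ≤ t) (ht2 : t ≤ 0.6932)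
    (hLb : 3*N^2*(1+4*t) ≤ Lr) (hBlt : B < Lr) (hB0 : 0 ≤ B)
    (hTr : Tr ≤ 1 + (Lr-1)/2 + N/2) (hMr : Mr ≤ (Lr-1+N)/2)
    (hKr : (Lr-1)/4 - N/2 - 1 ≤ Kr) :
    Tr + (Mr * B - 3*N^2*(t*Kr)) ≤ ((Lr-1)/2) * B := by
  have hslope : 0 ≤ 3*t*N^2/4 - N/2 - 1/2 := by
    nlinarith [mul_nonneg (by linarith : (0:ℝ) ≤ N - 2) (by linarith : (0:ℝ) ≤ N)]
  have hR : 0 ≤ 9*N^4*t^2 + (9/4)*N^4*t - 7.5*N^3*t - 1.5*N^3 - (39/4)*N^2*t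
      - 1.5*N^2 - N/2 - 1/2 := by
    have e2 : (0:ℝ) ≤ (N-2)^2 := sq_nonneg _
    have e3 : (0:ℝ) ≤ (N-2)^3 := by
      have : (0:ℝ) ≤ N - 2 := by linarith
      positivity
    have e4 : (0:ℝ) ≤ (N-2)^4 := by positivity
    have f1 : (0:ℝ) ≤ N^4 * (t - 0.6931)^2 := by positivity
    have f2 : (0:ℝ) ≤ (t - 0.6931) * N^4 := by
      nlinarith [pow_nonneg (by linarith : (0:ℝ) ≤ N) 4]
    have f3 : (0:ℝ) ≤ (0.6932 - t) * N^3 := by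
      nlinarith [pow_nonneg (by linarith : (0:ℝ) ≤ N) 3]
    have f4 : (0:ℝ) ≤ (0.6932 - t) * N^2 := by nlinarith [sq_nonneg N]
    nlinarith [e2, e3, e4, f1, f2, f3, f4]
  have hfin : 1 + (Lr-1)/2 + N/2 + (N/2)*Lr ≤ 3*N^2*t*((Lr-1)/4 - N/2 - 1) := by
    nlinarith [mul_nonneg (sub_nonneg.mpr hLb) hslope, hR, hLb, ht1, hN2]
  have hb1 : Mr * B ≤ ((Lr-1+N)/2) * B := mul_le_mul_of_nonneg_right hMr hB0
  have hb2 : (3*N^2*t) * ((Lr-1)/4 - N/2 - 1) ≤ (3*N^2*t) * Kr := by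
    apply mul_le_mul_of_nonneg_left hKr
    exact mul_nonneg (by positivity : (0:ℝ) ≤ 3*N^2) (by linarith : (0:ℝ) ≤ t)
  have hNB : (N/2) * B ≤ (N/2) * Lr := by
    apply mul_le_mul_of_nonneg_left hBlt.le
    linarith
  linarith only [hb1, hb2, hNB, hTr, hfin]

set_option maxHeartbeats 1600000 in
/-- For an even modulus `n ≥ 2` and a stopping set consisting of `{1}` together with
`n/2` residue classes mod `n`, the expected total number of dead sticks from starting
length `L ∉ 𝔖` is at most `6 n² log L`. -/
theorem stmt_8 (n : ℕ) (hn : 2 ≤ n) (hne : Even n)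
    (S : Finset ℕ) (hS : S ⊆ Finset.range n) (hcard : S.card = n / 2)
    (E : ℕ → ℝ)
    (hstop : ∀ L, 0 < L → (L = 1 ∨ L % n ∈ S) → E L = 1)
    (hrec : ∀ L, 1 < L → ¬(L = 1 ∨ L % n ∈ S) →
      E L = 2 / ((L : ℝ) - 1) * ∑ ℓ ∈ Finset.Icc 1 (L - 1), E ℓ) :
    ∀ L, 1 < L → ¬(L = 1 ∨ L % n ∈ S) → E L ≤ 6 * (n : ℝ) ^ 2 * Real.log L := by
  obtain ⟨k, hk⟩ := hne
  have hkn : n = 2 * k := by omega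
  have hk1 : 1 ≤ k := by omega
  have hN2 : (2:ℝ) ≤ (n:ℝ) := by exact_mod_cast hn
  set N : ℝ := (n:ℝ) with hNdef
  have hκ : (k:ℝ) = N / 2 := by rw [hNdef]; push_cast [hkn]; ring
  set t : ℝ := Real.log 2 with htdef
  have ht1 : 0.6931 ≤ t := le_of_lt (lt_of_lt_of_le (by norm_num) Real.log_two_gt_d9.le)
  have ht2 : t ≤ 0.6932 := le_of_lt (lt_of_le_of_lt Real.log_two_lt_d9.le (by norm_num))
  -- counting bounds, in ℕ
  have hTup : ∀ m : ℕ, ((Finset.Icc 1 m).filter (fun ℓ => ℓ = 1 ∨ ℓ % n ∈ S)).card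
      ≤ 1 + k * (m / n + 1) := by
    intro m
    have hsplit : (Finset.Icc 1 m).filter (fun ℓ => ℓ = 1 ∨ ℓ % n ∈ S)
        ⊆ (Finset.Icc 1 m).filter (fun ℓ => ℓ = 1)
          ∪ (Finset.Icc 1 m).filter (fun ℓ => ℓ % n ∈ S) := by
      rw [← Finset.filter_or]
    calc ((Finset.Icc 1 m).filter (fun ℓ => ℓ = 1 ∨ ℓ % n ∈ S)).card
        ≤ (((Finset.Icc 1 m).filter (fun ℓ => ℓ = 1))
            ∪ (Finset.Icc 1 m).filter (fun ℓ => ℓ % n ∈ S)).card :=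
          Finset.card_le_card hsplit
      _ ≤ ((Finset.Icc 1 m).filter (fun ℓ => ℓ = 1)).card
            + ((Finset.Icc 1 m).filter (fun ℓ => ℓ % n ∈ S)).card := Finset.card_union_le _ _
      _ ≤ 1 + k * (m / n + 1) := by
          gcongr
          · have : (Finset.Icc 1 m).filter (fun ℓ => ℓ = 1) ⊆ {1} := by
              intro x hx; simp only [Finset.mem_filter] at hx; simp [hx.2]
            simpa using Finset.card_le_card this
          · rw [sum_class_card]
            calc ∑ r ∈ S, ((Finset.Icc 1 m).filter (fun ℓ => ℓ % n = r)).card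
                ≤ ∑ _r ∈ S, (m / n + 1) := Finset.sum_le_sum (fun r _ => count_res_upper n r m)
              _ = k * (m / n + 1) := by rw [Finset.sum_const, hcard, hkn]; simp [Nat.mul_div_cancel_left]
  have hTlow : ∀ m : ℕ, k * (m / n)
      ≤ ((Finset.Icc 1 m).filter (fun ℓ => ℓ = 1 ∨ ℓ % n ∈ S)).card := by
    intro m
    have hsub : (Finset.Icc 1 m).filter (fun ℓ => ℓ % n ∈ S)
        ⊆ (Finset.Icc 1 m).filter (fun ℓ => ℓ = 1 ∨ ℓ % n ∈ S) := by
      intro ℓ hℓ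
      rw [Finset.mem_filter] at hℓ ⊢
      exact ⟨hℓ.1, Or.inr hℓ.2⟩
    calc k * (m / n) = ∑ _r ∈ S, (m / n) := by rw [Finset.sum_const, hcard, hkn]; simp [Nat.mul_div_cancel_left]
      _ ≤ ∑ r ∈ S, ((Finset.Icc 1 m).filter (fun ℓ => ℓ % n = r)).card :=
          Finset.sum_le_sum (fun r hr => count_res_lower n r m (by omega)
            (Finset.mem_range.mp (hS hr)))
      _ = ((Finset.Icc 1 m).filter (fun ℓ => ℓ % n ∈ S)).card := (sum_class_card n S m).symm
      _ ≤ _ := Finset.card_le_card hsub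
  -- trivial bound E L ≤ L
  have htriv : ∀ L : ℕ, 1 ≤ L → E L ≤ (L:ℝ) := by
    intro L
    induction L using Nat.strong_induction_on with
    | _ L ih =>
      intro hL1
      by_cases hs : L = 1 ∨ L % n ∈ S
      · rw [hstop L hL1 hs]; exact_mod_cast hL1
      · have hL2 : 2 ≤ L := by
          rcases Nat.eq_or_lt_of_le hL1 with h | h
          · exact absurd (Or.inl h.symm) hs
          · omega
        rw [hrec L hL2 hs]
        have hLr : (1:ℝ) < (L:ℝ) := by exact_mod_cast hL2.trans_lt' (by norm_num)
        have hpos : (0:ℝ) < (L:ℝ) - 1 := by linarith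
        have hsum : ∑ ℓ ∈ Finset.Icc 1 (L-1), E ℓ ≤ ∑ ℓ ∈ Finset.Icc 1 (L-1), (ℓ:ℝ) := by
          apply Finset.sum_le_sum
          intro ℓ hℓ
          simp only [Finset.mem_Icc] at hℓ
          exact ih ℓ (by omega) hℓ.1
        have hg := gauss_icc_real (L-1)
        have hcast : ((L-1 : ℕ) : ℝ) = (L:ℝ) - 1 := by
          push_cast [Nat.cast_sub hL1]; ring
        rw [hcast] at hg
        calc 2 / ((L:ℝ) - 1) * ∑ ℓ ∈ Finset.Icc 1 (L-1), E ℓ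
            ≤ 2 / ((L:ℝ) - 1) * (((L:ℝ)-1) * (((L:ℝ)-1) + 1) / 2) := by
              apply mul_le_mul_of_nonneg_left _ (by positivity)
              rw [← hg]; exact hsum
          _ = (L:ℝ) := by field_simp; ring
  -- main strengthened bound
  have hmain : ∀ L : ℕ, 1 < L → ¬(L = 1 ∨ L % n ∈ S) → E L ≤ 3 * N^2 * (1 + Real.log L) := by
    intro L
    induction L using Nat.strong_induction_on with
    | _ L ih =>
      intro hL1 hs
      by_cases hcase : (L:ℝ) ≤ 3 * N^2 * (1 + Real.log L)
      · exact (htriv L (by omega)).trans hcase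
      · push_neg at hcase
        set x : ℝ := Real.log L with hxdef
        have hLr2 : (2:ℝ) ≤ (L:ℝ) := by exact_mod_cast hL1
        have hx0 : 0 ≤ x := Real.log_nonneg (by linarith)
        have hxt : t ≤ x := Real.log_le_log (by norm_num) hLr2
        set m := L - 1 with hmdef
        have hm1 : m = L - 1 := rfl
        have hmr : (m:ℝ) = (L:ℝ) - 1 := by push_cast [hmdef, Nat.cast_sub (by omega : 1 ≤ L)]; ring
        set H := L / 2 with hHdef
        have hHm : H ≤ m := by omega
        have h2H : 2 * H ≤ L := by omega
        have hH2 : (L:ℝ) - 1 ≤ 2 * (H:ℝ) := by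
          have h : L - 1 ≤ 2 * H := by omega
          have h' : ((L-1:ℕ):ℝ) ≤ ((2*H:ℕ):ℝ) := Nat.cast_le.mpr h
          push_cast [Nat.cast_sub (by omega : 1 ≤ L)] at h'
          linarith
        -- pointwise bound
        set p : ℕ → Prop := fun ℓ => ℓ = 1 ∨ ℓ % n ∈ S with hpdef
        have hpt : ∀ ℓ ∈ Finset.Icc 1 m, E ℓ ≤
            (if ℓ = 1 ∨ ℓ % n ∈ S then (1:ℝ)
             else 3 * N^2 * (1 + x) - 3 * N^2 * (if ℓ ≤ H then t else 0)) := by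
          intro ℓ hℓ
          simp only [Finset.mem_Icc] at hℓ
          by_cases hsℓ : ℓ = 1 ∨ ℓ % n ∈ S
          · rw [if_pos hsℓ, hstop ℓ (by omega) hsℓ]
          · rw [if_neg hsℓ]
            have hℓ2 : 2 ≤ ℓ := by
              rcases hℓ.1.eq_or_lt with h | h
              · exact absurd (Or.inl h.symm) hsℓ
              · omega
            have hih := ih ℓ (by omega) (by omega) hsℓ
            have hlog : Real.log ℓ ≤ x - (if ℓ ≤ H then t else 0) := by
              by_cases hlH : ℓ ≤ H
              · rw [if_pos hlH]
                have h2l : (2:ℝ) * ℓ ≤ (L:ℝ) := by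
                  have : 2 * ℓ ≤ L := by omega
                  exact_mod_cast this
                have := Real.log_le_log (by positivity : (0:ℝ) < 2 * ℓ) h2l
                rw [Real.log_mul (by norm_num) (by positivity)] at this
                rw [hxdef, htdef]; linarith
              · rw [if_neg hlH]
                have : (ℓ:ℝ) ≤ (L:ℝ) := by exact_mod_cast (by omega : ℓ ≤ L)
                simp only [sub_zero]
                exact Real.log_le_log (by positivity) this
            have hN2' : (0:ℝ) ≤ 3 * N^2 := by positivity
            calc E ℓ ≤ 3 * N^2 * (1 + Real.log ℓ) := hih
              _ ≤ 3 * N^2 * (1 + (x - (if ℓ ≤ H then t else 0))) := by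
                  apply mul_le_mul_of_nonneg_left _ hN2'
                  linarith
              _ = 3 * N^2 * (1 + x) - 3 * N^2 * (if ℓ ≤ H then t else 0) := by ring
        have hsum := Finset.sum_le_sum hpt
        -- cardinalities
        set T := ((Finset.Icc 1 m).filter (fun ℓ => ℓ = 1 ∨ ℓ % n ∈ S)).card with hTdef
        set M := ((Finset.Icc 1 m).filter (fun ℓ => ¬(ℓ = 1 ∨ ℓ % n ∈ S))).card with hMdef
        set K := (((Finset.Icc 1 m).filter (fun ℓ => ¬(ℓ = 1 ∨ ℓ % n ∈ S))).filter
            (fun ℓ => ℓ ≤ H)).card with hKdef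
        have hTM : T + M = m := by
          rw [hTdef, hMdef, Finset.card_filter_add_card_filter_not, Nat.card_Icc]
          omega
        -- K lower bound
        have hKlow : H - ((Finset.Icc 1 H).filter (fun ℓ => ℓ = 1 ∨ ℓ % n ∈ S)).card ≤ K := by
          have hsub : (Finset.Icc 1 H).filter (fun ℓ => ¬(ℓ = 1 ∨ ℓ % n ∈ S))
              ⊆ ((Finset.Icc 1 m).filter (fun ℓ => ¬(ℓ = 1 ∨ ℓ % n ∈ S))).filter
                (fun ℓ => ℓ ≤ H) := by
            intro ℓ hℓ
            simp only [Finset.mem_filter, Finset.mem_Icc] at hℓ ⊢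
            exact ⟨⟨⟨hℓ.1.1, hℓ.1.2.trans hHm⟩, hℓ.2⟩, hℓ.1.2⟩
          have := Finset.card_le_card hsub
          have hHcard : ((Finset.Icc 1 H).filter (fun ℓ => ℓ = 1 ∨ ℓ % n ∈ S)).card
              + ((Finset.Icc 1 H).filter (fun ℓ => ¬(ℓ = 1 ∨ ℓ % n ∈ S))).card = H := by
            rw [Finset.card_filter_add_card_filter_not, Nat.card_Icc]
            omega
          omega
        have hSH_le : ((Finset.Icc 1 H).filter (fun ℓ => ℓ = 1 ∨ ℓ % n ∈ S)).card ≤ H := by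
          have h := Finset.card_filter_le (Finset.Icc 1 H) (fun ℓ => ℓ = 1 ∨ ℓ % n ∈ S)
          rw [Nat.card_Icc] at h
          omega
        have hHK : H ≤ K + ((Finset.Icc 1 H).filter (fun ℓ => ℓ = 1 ∨ ℓ % n ∈ S)).card := by
          omega
        -- real versions of the counting facts
        have hdm := Nat.div_add_mod m n
        have hdmr : N * ((m/n : ℕ):ℝ) + ((m % n : ℕ):ℝ) = (m:ℝ) := by
          rw [hNdef]; exact_mod_cast hdm
        have hdmltr : ((m % n : ℕ):ℝ) < N := by
          rw [hNdef]; exact_mod_cast Nat.mod_lt m (show 0 < n by omega)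
        have hdHr : N * ((H/n : ℕ):ℝ) ≤ (H:ℝ) := by
          rw [hNdef]; exact_mod_cast Nat.mul_div_le H n
        have hTupr : (T:ℝ) ≤ 1 + (k:ℝ) * ((m/n:ℕ):ℝ) + (k:ℝ) := by
          have h := hTup m
          have h' : (T:ℝ) ≤ ((1 + k * (m/n + 1) : ℕ):ℝ) := by exact_mod_cast h
          push_cast at h'; linarith
        have hTlowr : (k:ℝ) * ((m/n:ℕ):ℝ) ≤ (T:ℝ) := by
          have h := hTlow m
          exact_mod_cast h
        have hSHr : (((Finset.Icc 1 H).filter (fun ℓ => ℓ = 1 ∨ ℓ % n ∈ S)).card :ℝ)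
            ≤ 1 + (k:ℝ) * ((H/n:ℕ):ℝ) + (k:ℝ) := by
          have h := hTup H
          have h' : ((((Finset.Icc 1 H).filter (fun ℓ => ℓ = 1 ∨ ℓ % n ∈ S)).card):ℝ)
              ≤ ((1 + k * (H/n + 1) : ℕ):ℝ) := by exact_mod_cast h
          push_cast at h'; linarith
        have hHKr : (H:ℝ) ≤ (K:ℝ) + (((Finset.Icc 1 H).filter (fun ℓ => ℓ = 1 ∨ ℓ % n ∈ S)).card :ℝ) := by
          exact_mod_cast hHK
        have hTMr : (T:ℝ) + (M:ℝ) = (m:ℝ) := by exact_mod_cast hTM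
        have hmod_nonneg : (0:ℝ) ≤ ((m % n : ℕ):ℝ) := by positivity
        have hHn_nonneg : (0:ℝ) ≤ ((H/n : ℕ):ℝ) := by positivity
        -- clean real bounds
        have hMr : (M:ℝ) ≤ ((L:ℝ) - 1 + N)/2 := by
          rw [hκ] at hTlowr
          linarith only [hdmr, hdmltr, hTMr, hmr, hTlowr]
        have hTr : (T:ℝ) ≤ 1 + ((L:ℝ)-1)/2 + N/2 := by
          rw [hκ] at hTupr
          linarith only [hdmr, hmod_nonneg, hmr, hTupr]
        have hKr : ((L:ℝ)-1)/4 - N/2 - 1 ≤ (K:ℝ) := by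
          rw [hκ] at hSHr
          linarith only [hdHr, hHKr, hH2, hN2, hSHr]
        -- bootstrap lower bound on L
        have hL4 : 4*N^2 < (L:ℝ) := boot_4N N x t L hN2 ht1 hxt hcase
        have hx4 : 2*t + 2*Real.log N ≤ x := by
          have h0 : (0:ℝ) < 4*N^2 := by positivity
          have h := Real.log_le_log h0 hL4.le
          rw [show (4:ℝ)*N^2 = (2*N)^2 by ring] at h
          rw [show ((2*N)^2 : ℝ) = (2*N)^(2:ℕ) by norm_num] at h
          rw [Real.log_pow, Real.log_mul (by norm_num) (by positivity)] at h
          rw [hxdef, htdef]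
          push_cast at h
          linarith
        have hlogN : t ≤ Real.log N := Real.log_le_log (by norm_num) hN2
        have hLb : 3*N^2*(1+4*t) ≤ (L:ℝ) :=
          boot_lb N x t L hN2 ht1 (by linarith only [hx4, hlogN]) hcase
        -- assemble the sum bound
        have hsplit : (∑ i ∈ Finset.Icc 1 m, if i = 1 ∨ i % n ∈ S then (1:ℝ)
              else 3*N^2*(1+x) - 3*N^2 * (if i ≤ H then t else 0))
            = (T:ℝ) + ((M:ℝ) * (3*N^2*(1+x)) - 3*N^2 * (t * (K:ℝ))) := by
          rw [Finset.sum_ite]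
          congr 1
          · rw [hTdef]; simp
          · rw [Finset.sum_sub_distrib, Finset.sum_const, ← Finset.mul_sum,
              ← Finset.sum_filter, Finset.sum_const]
            rw [hMdef, hKdef]
            simp only [nsmul_eq_mul, smul_eq_mul]
            ring
        have hEsum : ∑ i ∈ Finset.Icc 1 m, E i
            ≤ (T:ℝ) + ((M:ℝ) * (3*N^2*(1+x)) - 3*N^2 * (t * (K:ℝ))) :=
          hsum.trans (le_of_eq hsplit)
        have hfinal : (T:ℝ) + ((M:ℝ) * (3*N^2*(1+x)) - 3*N^2 * (t * (K:ℝ)))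
            ≤ (((L:ℝ)-1)/2) * (3*N^2*(1+x)) :=
          key_num N t L (3*N^2*(1+x)) T M K hN2 ht1 ht2 hLb hcase (by positivity)
            hTr hMr hKr
        rw [hrec L hL1 hs]
        have hpos : (0:ℝ) < (L:ℝ) - 1 := by linarith
        calc 2/((L:ℝ)-1) * ∑ ℓ ∈ Finset.Icc 1 (L-1), E ℓ
            ≤ 2/((L:ℝ)-1) * ((((L:ℝ)-1)/2) * (3*N^2*(1+x))) := by
              apply mul_le_mul_of_nonneg_left _ (by positivity)
              exact hEsum.trans hfinal
          _ = 3*N^2*(1+x) := by field_simp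
  -- conclude
  intro L hL hs
  by_cases hL2 : L = 2
  · subst hL2
    have he2 : E 2 = 2 := by
      rw [hrec 2 (by norm_num) hs]
      norm_num [Finset.Icc_self, hstop 1 one_pos (Or.inl rfl)]
    rw [he2, show ((2:ℕ):ℝ) = 2 by norm_num, ← htdef]
    nlinarith [ht1, hN2, mul_nonneg (by linarith : (0:ℝ) ≤ N - 2) (by linarith : (0:ℝ) ≤ N)]
  · have h3 : 3 ≤ L := by omega
    have hm := hmain L hL hs
    have hlog1 : (1:ℝ) ≤ Real.log L := by
      have he : Real.exp 1 ≤ (L:ℝ) := by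
        have h1 := Real.exp_one_lt_d9
        have h2 : (3:ℝ) ≤ (L:ℝ) := by exact_mod_cast h3
        linarith
      exact (Real.le_log_iff_exp_le (by positivity)).mpr he
    nlinarith [hm, hlog1, sq_nonneg N]
end

section
/- Fix an even modulus n and a stopping set 𝔖 consisting of {1} together with n/2 residue classes mod n. Let M_{ℓ,k} denote the expected number of dead sticks of length < k from the uniform discrete breaking process started at length ℓ with stopping set 𝔖 (every dead stick counted, M_{ℓ,k} = [ℓ < k] if ℓ ∈ 𝔖, and M_{ℓ,k} = (2/(ℓ-1)) ∑_{x=1}^{ℓ-1} M_{x,k} for ℓ ∉ 𝔖). Then with c = 24n², for all k ≥ 2n and ℓ > 1 we have M_{ℓ,k} ≤ c log k. -/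
open Finset


/-- Worst-case telescoping product bound. -/
lemma sb_prod_le (N : ℕ) : ∀ (a : ℕ) (F : Finset ℕ), 1 ≤ a → (∀ j ∈ F, a < j) →
    F.card ≤ N →
    ∏ j ∈ F, (((j : ℝ) + 1) / ((j : ℝ) - 1)) ≤
      ((a : ℝ) + N) * ((a : ℝ) + N + 1) / ((a : ℝ) * ((a : ℝ) + 1)) := by
  induction N with
  | zero =>
    intro a F ha hF hcard
    have : F = ∅ := Finset.card_eq_zero.mp (Nat.le_zero.mp hcard)
    subst this
    have ha' : (1:ℝ) ≤ (a:ℝ) := by exact_mod_cast ha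
    simp only [Finset.prod_empty, Nat.cast_zero, add_zero]
    rw [div_self (by positivity)]
  | succ N ih =>
    intro a F ha hF hcard
    have ha' : (1:ℝ) ≤ (a:ℝ) := by exact_mod_cast ha
    rcases Finset.eq_empty_or_nonempty F with rfl | hne
    · simp only [Finset.prod_empty]
      rw [le_div_iff₀ (by positivity)]
      push_cast
      nlinarith [Nat.cast_nonneg (α := ℝ) N]
    · set j0 := F.min' hne with hj0
      have hj0F : j0 ∈ F := F.min'_mem hne
      have hj0a : a < j0 := hF _ hj0F
      have hrest : ∀ j ∈ F.erase j0, a + 1 < j := by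
        intro j hj
        have hjF := Finset.mem_of_mem_erase hj
        have hjne := Finset.ne_of_mem_erase hj
        have := F.min'_le j hjF
        omega
      have hcard' : (F.erase j0).card ≤ N := by
        rw [Finset.card_erase_of_mem hj0F]; omega
      have IH := ih (a+1) (F.erase j0) (by omega) hrest hcard'
      rw [← Finset.mul_prod_erase F _ hj0F]
      have hj02 : 2 ≤ j0 := by omega
      have hj0r : (1:ℝ) ≤ (j0:ℝ) - 1 := by
        have : (2:ℝ) ≤ (j0:ℝ) := by exact_mod_cast hj02
        linarith
      -- first factor bound
      have hfac : ((j0:ℝ)+1)/((j0:ℝ)-1) ≤ ((a:ℝ)+2)/(a:ℝ) := by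
        rw [div_le_div_iff₀ (by linarith) (by linarith)]
        have : (a:ℝ) + 1 ≤ (j0:ℝ) := by exact_mod_cast hj0a
        nlinarith
      have hprodpos : (0:ℝ) ≤ ∏ j ∈ F.erase j0, (((j : ℝ) + 1) / ((j : ℝ) - 1)) := by
        apply Finset.prod_nonneg
        intro j hj
        have := hrest j hj
        have : (a:ℝ) + 2 ≤ (j:ℝ) := by exact_mod_cast this
        have h1 : (0:ℝ) < (j:ℝ) - 1 := by linarith
        positivity
      have hfacpos : (0:ℝ) ≤ ((j0:ℝ)+1)/((j0:ℝ)-1) := by positivity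
      calc (((j0 : ℝ) + 1) / ((j0 : ℝ) - 1)) * ∏ j ∈ F.erase j0, (((j : ℝ) + 1) / ((j : ℝ) - 1))
          ≤ (((a:ℝ)+2)/(a:ℝ)) * (((a:ℝ)+1 + N) * ((a:ℝ)+1 + N + 1) / (((a:ℝ)+1) * ((a:ℝ)+1+1))) := by
            apply mul_le_mul hfac ?_ hprodpos (by positivity)
            exact le_trans IH (le_of_eq (by push_cast; ring))
        _ = ((a : ℝ) + (N+1)) * ((a : ℝ) + (N+1) + 1) / ((a : ℝ) * ((a : ℝ) + 1)) := by
            field_simp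
            ring
        _ ≤ ((a : ℝ) + ((N:ℕ)+1:ℕ)) * ((a : ℝ) + ((N:ℕ)+1:ℕ) + 1) / ((a : ℝ) * ((a : ℝ) + 1)) := le_of_eq (by push_cast; ring)

/-- Harmonic sum bound. -/
lemma sb_harm : ∀ (T : ℕ), 1 ≤ T → ∑ t ∈ Icc 1 T, (1:ℝ)/t ≤ 1 + Real.log T := by
  intro T hT1
  induction T, hT1 using Nat.le_induction with
  | base => simp
  | succ T hT ih =>
    rw [Finset.sum_Icc_succ_top (by omega)]
    have hT' : (1:ℝ) ≤ (T:ℝ) := by exact_mod_cast hT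
    have hlog : (1:ℝ)/((T:ℝ)+1) ≤ Real.log ((T:ℝ)+1) - Real.log T := by
      have h1 : (0:ℝ) < (T:ℝ)/((T:ℝ)+1) := by positivity
      have := Real.log_le_sub_one_of_pos h1
      rw [Real.log_div (by linarith) (by linarith)] at this
      have : Real.log T - Real.log ((T:ℝ)+1) ≤ (T:ℝ)/((T:ℝ)+1) - 1 := this
      have he : (T:ℝ)/((T:ℝ)+1) - 1 = -(1/((T:ℝ)+1)) := by field_simp; ring
      linarith [he ▸ this]
    have := ih
    push_cast
    linarith

/-- In a window of `n` consecutive integers, at most `n - S.card` avoid residues in `S`. -/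
lemma sb_count (n : ℕ) (hn : 0 < n) (S : Finset ℕ) (hS : S ⊆ Finset.range n) (a : ℕ) :
    (((Finset.Ioc a (a+n)).filter (fun j => ¬(j = 1 ∨ j % n ∈ S))).card) ≤ n - S.card := by
  have h1 : ((Finset.Ioc a (a+n)).filter (fun j => ¬(j = 1 ∨ j % n ∈ S))).card
      ≤ ((Finset.range n) \ S).card := by
    apply Finset.card_le_card_of_injOn (fun j => j % n)
    · intro j hj
      simp only [Finset.coe_filter, Set.mem_setOf_eq, Finset.mem_coe, Finset.mem_filter, Finset.mem_Ioc] at hj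
      simp only [Finset.mem_coe, Finset.mem_sdiff, Finset.mem_range]
      exact ⟨Nat.mod_lt _ hn, fun h => hj.2 (Or.inr h)⟩
    · intro j1 h1 j2 h2 heq
      simp only [coe_filter, Set.mem_setOf_eq, Finset.mem_Ioc] at h1 h2
      have heq' : j1 % n = j2 % n := heq
      have d1 := Nat.div_add_mod j1 n
      have d2 := Nat.div_add_mod j2 n
      suffices hqq : j1 / n = j2 / n by rw [hqq, heq'] at d1; omega
      by_contra hne
      rcases Nat.lt_or_ge (j1/n) (j2/n) with h | h
      · have h' : j1 / n + 1 ≤ j2 / n := h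
        have h2' := Nat.mul_le_mul_left n h'
        rw [Nat.mul_succ] at h2'
        omega
      · have h' : j2 / n + 1 ≤ j1 / n := by omega
        have h2' := Nat.mul_le_mul_left n h'
        rw [Nat.mul_succ] at h2'
        omega
  rwa [Finset.card_sdiff_of_subset hS, Finset.card_range] at h1

noncomputable def sbP (m : ℕ) : ℝ := ∏ t ∈ Finset.Ico 1 m, (1 + 1/(4*(t:ℝ)*((t:ℝ)+1)))

noncomputable def sbV (n k m : ℕ) : ℝ :=
  1 + ∑ t ∈ Finset.Ico 1 m, (if t*n+1 < k then (1:ℝ)/t else 0)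

lemma sbP_one : sbP 1 = 1 := by simp [sbP]

lemma sbP_succ (m : ℕ) (hm : 1 ≤ m) :
    sbP (m+1) = sbP m * (1 + 1/(4*(m:ℝ)*((m:ℝ)+1))) := by
  rw [sbP, sbP, Finset.prod_Ico_succ_top hm]

lemma sbP_ge_one (m : ℕ) : 1 ≤ sbP m := by
  rw [sbP]
  calc (1:ℝ) = ∏ t ∈ Finset.Ico 1 m, 1 := by simp
    _ ≤ _ := by
      apply Finset.prod_le_prod (by intros; norm_num)
      intro t ht
      have h1 : (1:ℕ) ≤ t := (Finset.mem_Ico.mp ht).1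
      have h2 : (1:ℝ) ≤ (t:ℝ) := by exact_mod_cast h1
      have h3 : (0:ℝ) < 4*(t:ℝ)*((t:ℝ)+1) := by positivity
      nlinarith [one_div_pos.mpr h3]

lemma sbP_le (m : ℕ) (hm : 1 ≤ m) : sbP m * (2*(m:ℝ)+1) ≤ 3*(m:ℝ) := by
  induction m, hm using Nat.le_induction with
  | base => rw [sbP_one]; norm_num
  | succ m hm ih =>
    rw [sbP_succ m hm]
    have hm' : (1:ℝ) ≤ (m:ℝ) := by exact_mod_cast hm
    have hpos : (0:ℝ) < 4*(m:ℝ)*((m:ℝ)+1) := by positivity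
    have hid : (1:ℝ) + 1/(4*(m:ℝ)*((m:ℝ)+1)) = (2*(m:ℝ)+1)^2 / (4*(m:ℝ)*((m:ℝ)+1)) := by
      field_simp; ring
    rw [hid]
    push_cast
    rw [show sbP m * ((2*(m:ℝ)+1)^2/(4*(m:ℝ)*((m:ℝ)+1))) * (2*((m:ℝ)+1)+1)
        = sbP m * (2*(m:ℝ)+1) * ((2*(m:ℝ)+1)*(2*(m:ℝ)+3)) / (4*(m:ℝ)*((m:ℝ)+1)) from by ring,
      div_le_iff₀ hpos]
    nlinarith [mul_le_mul_of_nonneg_right ih (by positivity : (0:ℝ) ≤ (2*(m:ℝ)+1)*(2*(m:ℝ)+3))]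
lemma sbP_le' (m : ℕ) (hm : 1 ≤ m) : sbP m ≤ 3/2 := by
  have h := sbP_le m hm
  have hm' : (1:ℝ) ≤ (m:ℝ) := by exact_mod_cast hm
  nlinarith [sbP_ge_one m]

lemma sbV_ge_one (n k m : ℕ) : 1 ≤ sbV n k m := by
  have : (0:ℝ) ≤ ∑ t ∈ Finset.Ico 1 m, (if t*n+1 < k then (1:ℝ)/t else 0) := by
    apply Finset.sum_nonneg; intro t ht; split <;> positivity
  simp only [sbV]; linarith

lemma sbV_succ (n k m : ℕ) (hm : 1 ≤ m) :
    sbV n k (m+1) = sbV n k m + (if m*n+1 < k then (1:ℝ)/m else 0) := by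
  rw [sbV, sbV, Finset.sum_Ico_succ_top hm]; ring

lemma sbV_le (n k m : ℕ) (hn : 2 ≤ n) (hk : 4 ≤ k) : sbV n k m ≤ 2 * Real.log k := by
  have hsum : ∑ t ∈ Finset.Ico 1 m, (if t*n+1 < k then (1:ℝ)/t else 0)
      ≤ ∑ t ∈ Finset.Icc 1 (k/2), (1:ℝ)/t := by
    rw [← Finset.sum_filter]
    apply Finset.sum_le_sum_of_subset_of_nonneg
    · intro t ht
      simp only [Finset.mem_filter, Finset.mem_Ico] at ht
      simp only [Finset.mem_Icc]
      have h1 : 2*t ≤ t*n := by nlinarith [ht.1.1]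
      omega
    · intro t _ _; positivity
  have hk2 : 1 ≤ k/2 := by omega
  have hharm := sb_harm (k/2) hk2
  have hlog : Real.log ((k/2 : ℕ) : ℝ) ≤ Real.log k - Real.log 2 := by
    have hle : ((k/2 : ℕ) : ℝ) ≤ (k:ℝ)/2 := by
      have := Nat.cast_div_le (α := ℝ) (m := k) (n := 2)
      simpa using this
    have hpos : (0:ℝ) < ((k/2:ℕ):ℝ) := by exact_mod_cast hk2
    calc Real.log ((k/2 : ℕ) : ℝ) ≤ Real.log ((k:ℝ)/2) := Real.log_le_log hpos hle
      _ = Real.log k - Real.log 2 := Real.log_div (by positivity) (by norm_num)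
  have hlogk : 2 * Real.log 2 ≤ Real.log k := by
    have : Real.log 4 ≤ Real.log k := by
      apply Real.log_le_log (by norm_num)
      exact_mod_cast hk
    have h4 : Real.log 4 = 2 * Real.log 2 := by
      rw [show (4:ℝ) = 2^2 by norm_num, Real.log_pow]; push_cast; ring
    linarith
  have hl2 := Real.log_two_gt_d9
  simp only [sbV]
  nlinarith

lemma sb_arith (h m v p χ T c Q : ℝ)
    (h1 : 1 ≤ h) (hm : 1 ≤ m) (hv : 1 ≤ v) (hp : 1 ≤ p) (hχ : χ = 0 ∨ χ = 1)
    (hT2 : T ≤ (2*h)^3*m*v*p) (hc : 0 ≤ c) (hc2 : c ≤ 2*h*χ)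
    (hQ0 : 0 ≤ Q) (hQ : Q ≤ (2*h*m+h)*(2*h*m+h+1)/((2*h*m)*(2*h*m+1))) :
    (T + c)*Q ≤ (2*h)^3*(m+1)*(v+χ/m)*(p*(1+1/(4*m*(m+1)))) := by
  have hm0 : (0:ℝ) < m := by linarith
  have hh0 : (0:ℝ) < h := by linarith
  have hd1 : (0:ℝ) < (2*h*m)*(2*h*m+1) := by positivity
  have hd2 : (0:ℝ) < (2*m)^2 := by positivity
  have hA : (2*h*m+h)*(2*h*m+h+1)/((2*h*m)*(2*h*m+1)) ≤ (2*m+1)^2/(2*m)^2 := by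
    rw [div_le_div_iff₀ hd1 hd2]
    nlinarith [mul_pos hh0 hm0, mul_pos (mul_pos hh0 hm0) hm0]
  have hQ' : Q ≤ (2*m+1)^2/(2*m)^2 := le_trans hQ hA
  have hX0 : (0:ℝ) ≤ (2*h)^3*m*v*p := by positivity
  have hχ0 : (0:ℝ) ≤ χ := by rcases hχ with rfl | rfl <;> norm_num
  have step1 : (T + c)*Q ≤ ((2*h)^3*m*v*p + 2*h*χ) * ((2*m+1)^2/(2*m)^2) := by
    apply mul_le_mul (by linarith) hQ' hQ0 (by positivity)
  refine le_trans step1 ?_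
  have hE : (0:ℝ) < 1 + 1/(4*m*(m+1)) := by positivity
  have hQid : (2*m+1)^2/(2*m)^2 = (m+1)/m * (1+1/(4*m*(m+1))) := by
    field_simp; ring
  rw [hQid]
  rcases hχ with rfl | rfl
  · apply le_of_eq
    field_simp
    ring
  · have key : ((2*h)^3*m*v*p + 2*h*1) * ((m+1)/m) ≤ (2*h)^3*(m+1)*(v+1/m)*p := by
      rw [← mul_div_assoc, div_le_iff₀ hm0]
      have expand : (2*h)^3*(m+1)*(v+1/m)*p*m = (2*h)^3*(m+1)*v*p*m + (2*h)^3*(m+1)*p := by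
        field_simp
      rw [expand]
      have hh2 : (1:ℝ) ≤ h^2 := by nlinarith
      have hh2p : (1:ℝ) ≤ h^2 * p := by nlinarith
      have c1 : (0:ℝ) ≤ h*(m+1)*(h^2*p-1) :=
        mul_nonneg (mul_nonneg hh0.le (by linarith)) (by linarith)
      have c2 : (0:ℝ) ≤ h*(m+1) := by positivity
      nlinarith [c1, c2]
    calc ((2*h)^3*m*v*p + 2*h*1) * ((m+1)/m * (1+1/(4*m*(m+1))))
        = ((2*h)^3*m*v*p + 2*h*1) * ((m+1)/m) * (1+1/(4*m*(m+1))) := by ring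
      _ ≤ (2*h)^3*(m+1)*(v+1/m)*p * (1+1/(4*m*(m+1))) := by
          apply mul_le_mul_of_nonneg_right key (le_of_lt hE)
      _ = (2*h)^3*(m+1)*(v+1/m)*(p*(1+1/(4*m*(m+1)))) := by ring

section
variable (n k : ℕ) (S : Finset ℕ) (M : ℕ → ℕ → ℝ)

lemma sb_nonneg
    (hstop : ∀ ℓ k, 0 < ℓ → (ℓ = 1 ∨ ℓ % n ∈ S) → M ℓ k = if ℓ < k then 1 else 0)
    (hrec : ∀ ℓ k, 1 < ℓ → ¬(ℓ = 1 ∨ ℓ % n ∈ S) →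
      M ℓ k = 2 / ((ℓ : ℝ) - 1) * ∑ x ∈ Finset.Icc 1 (ℓ - 1), M x k) :
    ∀ x, 1 ≤ x → 0 ≤ M x k := by
  intro x
  induction x using Nat.strong_induction_on with
  | _ x ih =>
    intro hx
    by_cases hs : x = 1 ∨ x % n ∈ S
    · rw [hstop x k (by omega) hs]; split <;> norm_num
    · have h1 : x ≠ 1 := fun h => hs (Or.inl h)
      have hx2 : 1 < x := by omega
      rw [hrec x k hx2 hs]
      have hx2' : (2:ℝ) ≤ (x:ℝ) := by exact_mod_cast hx2
      apply mul_nonneg (le_of_lt (div_pos two_pos (by linarith)))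
      apply Finset.sum_nonneg
      intro y hy
      rw [Finset.mem_Icc] at hy
      exact ih y (by omega) (by omega)

lemma sb_factor_ge_one (j : ℕ) (hj : 1 ≤ j) :
    1 ≤ (if j = 1 ∨ j % n ∈ S then (1:ℝ) else ((j:ℝ)+1)/((j:ℝ)-1)) := by
  split
  · exact le_refl 1
  · next hs =>
    have h1 : j ≠ 1 := fun h => hs (Or.inl h)
    have hj2 : 2 ≤ j := by omega
    have : (2:ℝ) ≤ (j:ℝ) := by exact_mod_cast hj2
    rw [le_div_iff₀ (by linarith)]
    linarith

lemma sb_prod_ge_one (a b : ℕ) :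
    1 ≤ ∏ j ∈ Finset.Ioc a b, (if j = 1 ∨ j % n ∈ S then (1:ℝ) else ((j:ℝ)+1)/((j:ℝ)-1)) := by
  calc (1:ℝ) = ∏ _j ∈ Finset.Ioc a b, 1 := by simp
    _ ≤ _ := by
      apply Finset.prod_le_prod (by intros; norm_num)
      intro j hj
      exact sb_factor_ge_one n S j (by rw [Finset.mem_Ioc] at hj; omega)

lemma sb_fold
    (hstop : ∀ ℓ k, 0 < ℓ → (ℓ = 1 ∨ ℓ % n ∈ S) → M ℓ k = if ℓ < k then 1 else 0)
    (hrec : ∀ ℓ k, 1 < ℓ → ¬(ℓ = 1 ∨ ℓ % n ∈ S) →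
      M ℓ k = 2 / ((ℓ : ℝ) - 1) * ∑ x ∈ Finset.Icc 1 (ℓ - 1), M x k)
    (a : ℕ) :
    ∀ b, a ≤ b → ∑ x ∈ Finset.Icc 1 b, M x k ≤
      ((∑ x ∈ Finset.Icc 1 a, M x k) +
        ∑ j ∈ Finset.Ioc a b, (if (j = 1 ∨ j % n ∈ S) ∧ j < k then (1:ℝ) else 0)) *
      ∏ j ∈ Finset.Ioc a b, (if j = 1 ∨ j % n ∈ S then (1:ℝ) else ((j:ℝ)+1)/((j:ℝ)-1)) := by
  intro b hab
  induction b, hab using Nat.le_induction with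
  | base => simp
  | succ b hab ih =>
    rw [Finset.sum_Icc_succ_top (by omega : 1 ≤ b + 1)]
    rw [Finset.sum_Ioc_succ_top hab, Finset.prod_Ioc_succ_top hab]
    set Ta := ∑ x ∈ Finset.Icc 1 a, M x k with hTa
    set C := ∑ j ∈ Finset.Ioc a b, (if (j = 1 ∨ j % n ∈ S) ∧ j < k then (1:ℝ) else 0) with hC
    set Q := ∏ j ∈ Finset.Ioc a b, (if j = 1 ∨ j % n ∈ S then (1:ℝ) else ((j:ℝ)+1)/((j:ℝ)-1)) with hQ
    have hQ1 : 1 ≤ Q := sb_prod_ge_one n S a b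
    by_cases hs : b + 1 = 1 ∨ (b+1) % n ∈ S
    · rw [hstop (b+1) k (by omega) hs]
      rw [if_pos hs]
      have hite : (if (b + 1 = 1 ∨ (b+1) % n ∈ S) ∧ b + 1 < k then (1:ℝ) else 0)
          = (if b + 1 < k then (1:ℝ) else 0) := by
        by_cases hbk : b + 1 < k
        · rw [if_pos ⟨hs, hbk⟩, if_pos hbk]
        · rw [if_neg (fun h => hbk h.2), if_neg hbk]
      rw [hite, mul_one]
      have h01 : (0:ℝ) ≤ (if b + 1 < k then (1:ℝ) else 0) := by split <;> norm_num
      have : (if b + 1 < k then (1:ℝ) else 0) * 1 ≤ (if b + 1 < k then (1:ℝ) else 0) * Q :=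
        mul_le_mul_of_nonneg_left hQ1 h01
      ring_nf
      ring_nf at ih this
      linarith
    · have h1 : b + 1 ≠ 1 := fun h => hs (Or.inl h)
      have hb1 : 1 ≤ b := by omega
      rw [hrec (b+1) k (by omega) hs]
      rw [if_neg hs]
      have hb' : (1:ℝ) ≤ (b:ℝ) := by exact_mod_cast hb1
      have hsimp : (b + 1 - 1) = b := by omega
      rw [hsimp]
      have hcast : ((b+1 : ℕ):ℝ) - 1 = (b:ℝ) := by push_cast; ring
      have hifeq : (if (b + 1 = 1 ∨ (b+1) % n ∈ S) ∧ b + 1 < k then (1:ℝ) else 0) = 0 := by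
        rw [if_neg (fun h => hs h.1)]
      rw [hifeq, add_zero]
      have hratio : (0:ℝ) ≤ (((b+1:ℕ):ℝ)+1)/(((b+1:ℕ):ℝ)-1) := by
        rw [hcast]; positivity
      calc (∑ x ∈ Finset.Icc 1 b, M x k) + 2/(((b+1:ℕ):ℝ)-1) * (∑ x ∈ Finset.Icc 1 b, M x k)
          = (∑ x ∈ Finset.Icc 1 b, M x k) * ((((b+1:ℕ):ℝ)+1)/(((b+1:ℕ):ℝ)-1)) := by
            rw [hcast]; field_simp; push_cast; ring
        _ ≤ ((Ta + C) * Q) * ((((b+1:ℕ):ℝ)+1)/(((b+1:ℕ):ℝ)-1)) :=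
            mul_le_mul_of_nonneg_right ih hratio
        _ = (Ta + C) * (Q * ((((b+1:ℕ):ℝ)+1)/(((b+1:ℕ):ℝ)-1))) := by ring

end

lemma sb_inv (n k : ℕ) (hn : 2 ≤ n) (hne : Even n)
    (S : Finset ℕ) (hS : S ⊆ Finset.range n) (hcard : S.card = n / 2)
    (M : ℕ → ℕ → ℝ)
    (hstop : ∀ ℓ k, 0 < ℓ → (ℓ = 1 ∨ ℓ % n ∈ S) → M ℓ k = if ℓ < k then 1 else 0)
    (hrec : ∀ ℓ k, 1 < ℓ → ¬(ℓ = 1 ∨ ℓ % n ∈ S) →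
      M ℓ k = 2 / ((ℓ : ℝ) - 1) * ∑ x ∈ Finset.Icc 1 (ℓ - 1), M x k)
    (hk : 2 * n ≤ k) :
    ∀ m, 1 ≤ m → ∑ x ∈ Finset.Icc 1 (m*n), M x k ≤ (n:ℝ)^3 * m * sbV n k m * sbP m := by
  obtain ⟨r, hrr⟩ := hne
  have hr1 : 1 ≤ r := by omega
  have hr' : (1:ℝ) ≤ (r:ℝ) := by exact_mod_cast hr1
  have hncast : (n:ℝ) = 2*(r:ℝ) := by
    have : n = 2*r := by omega
    rw [this]; push_cast; ring
  intro m hm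
  induction m, hm using Nat.le_induction with
  | base =>
    rw [one_mul]
    have fold := sb_fold n k S M hstop hrec 0 n (by omega)
    have hT0 : ∑ x ∈ Finset.Icc 1 0, M x k = 0 := by simp
    rw [hT0, zero_add] at fold
    set C := ∑ j ∈ Finset.Ioc 0 n, (if (j = 1 ∨ j % n ∈ S) ∧ j < k then (1:ℝ) else 0) with hCdef
    set Q := ∏ j ∈ Finset.Ioc 0 n, (if j = 1 ∨ j % n ∈ S then (1:ℝ) else ((j:ℝ)+1)/((j:ℝ)-1)) with hQdef
    have hCn : C ≤ (n:ℝ) := by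
      calc C ≤ ∑ _j ∈ Finset.Ioc 0 n, (1:ℝ) := by
            apply Finset.sum_le_sum; intro j _; split <;> norm_num
        _ = (n:ℝ) := by simp
    have hQ0 : (0:ℝ) ≤ Q := le_trans zero_le_one (sb_prod_ge_one n S 0 n)
    have hQle : Q ≤ ((1:ℝ)+(r:ℝ))*((1:ℝ)+(r:ℝ)+1)/((1:ℝ)*((1:ℝ)+1)) := by
      have hqe : Q = ∏ j ∈ (Finset.Ioc 0 n).filter (fun j => ¬(j = 1 ∨ j % n ∈ S)),
          (((j:ℝ)+1)/((j:ℝ)-1)) := by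
        rw [hQdef, Finset.prod_ite, Finset.prod_const_one, one_mul]
      rw [hqe]
      have hcount : ((Finset.Ioc 0 n).filter (fun j => ¬(j = 1 ∨ j % n ∈ S))).card ≤ r := by
        have := sb_count n (by omega) S hS 0
        simp only [zero_add] at this
        omega
      have := sb_prod_le r 1 ((Finset.Ioc 0 n).filter (fun j => ¬(j = 1 ∨ j % n ∈ S)))
        (le_refl 1)
        (by intro j hj
            rw [Finset.mem_filter, Finset.mem_Ioc] at hj
            have : j ≠ 1 := fun h => hj.2 (Or.inl h)
            omega)
        hcount
      simpa using this
    have hfin : (n:ℝ) * (((1:ℝ)+(r:ℝ))*((1:ℝ)+(r:ℝ)+1)/((1:ℝ)*((1:ℝ)+1)))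
        ≤ (n:ℝ)^3 * 1 * sbV n k 1 * sbP 1 := by
      have h1 : sbV n k 1 = 1 := by simp [sbV]
      rw [h1, sbP_one, hncast]
      have hr2 : (r:ℝ) ≤ (r:ℝ)*(r:ℝ) := by nlinarith
      have hr3 : (r:ℝ)*(r:ℝ) ≤ (r:ℝ)*(r:ℝ)*(r:ℝ) := by nlinarith
      nlinarith [hr2, hr3]
    calc ∑ x ∈ Finset.Icc 1 n, M x k ≤ C * Q := fold
      _ ≤ (n:ℝ) * (((1:ℝ)+(r:ℝ))*((1:ℝ)+(r:ℝ)+1)/((1:ℝ)*((1:ℝ)+1))) := by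
          apply mul_le_mul hCn hQle hQ0 (by positivity)
      _ ≤ _ := by
          convert hfin using 2
          norm_num
  | succ m hm ih =>
    have hmn1 : 1 ≤ m * n := Nat.one_le_iff_ne_zero.mpr (by positivity)
    have hm' : (1:ℝ) ≤ (m:ℝ) := by exact_mod_cast hm
    have hmncast : ((m*n : ℕ):ℝ) = 2*(r:ℝ)*(m:ℝ) := by push_cast; rw [hncast]; ring
    have hgoal_eq : (m+1)*n = m*n + n := by ring
    rw [hgoal_eq]
    have fold := sb_fold n k S M hstop hrec (m*n) (m*n + n) (by omega)
    set C := ∑ j ∈ Finset.Ioc (m*n) (m*n + n), (if (j = 1 ∨ j % n ∈ S) ∧ j < k then (1:ℝ) else 0) with hCdef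
    set Q := ∏ j ∈ Finset.Ioc (m*n) (m*n + n), (if j = 1 ∨ j % n ∈ S then (1:ℝ) else ((j:ℝ)+1)/((j:ℝ)-1)) with hQdef
    set χ : ℝ := if m*n+1 < k then 1 else 0 with hχdef
    have hχ01 : χ = 0 ∨ χ = 1 := by rw [hχdef]; split <;> simp
    have hC0 : 0 ≤ C := by
      apply Finset.sum_nonneg; intro j _; split <;> norm_num
    have hCle : C ≤ 2*(r:ℝ)*χ := by
      by_cases hcond : m*n+1 < k
      · have hχ1 : χ = 1 := by rw [hχdef, if_pos hcond]
        rw [hχ1, mul_one]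
        calc C ≤ ∑ _j ∈ Finset.Ioc (m*n) (m*n+n), (1:ℝ) := by
              apply Finset.sum_le_sum; intro j _; split <;> norm_num
          _ = (n:ℝ) := by simp
          _ = 2*(r:ℝ) := hncast
      · have hχ0 : χ = 0 := by rw [hχdef, if_neg hcond]
        rw [hχ0, mul_zero]
        apply le_of_eq
        apply Finset.sum_eq_zero
        intro j hj
        rw [Finset.mem_Ioc] at hj
        rw [if_neg]
        rintro ⟨-, hjk⟩
        omega
    have hQ0 : (0:ℝ) ≤ Q := le_trans zero_le_one (sb_prod_ge_one n S _ _)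
    have hQle : Q ≤ (2*(r:ℝ)*(m:ℝ)+(r:ℝ))*(2*(r:ℝ)*(m:ℝ)+(r:ℝ)+1)/((2*(r:ℝ)*(m:ℝ))*(2*(r:ℝ)*(m:ℝ)+1)) := by
      have hqe : Q = ∏ j ∈ (Finset.Ioc (m*n) (m*n+n)).filter (fun j => ¬(j = 1 ∨ j % n ∈ S)),
          (((j:ℝ)+1)/((j:ℝ)-1)) := by
        rw [hQdef, Finset.prod_ite, Finset.prod_const_one, one_mul]
      rw [hqe]
      have hcount : ((Finset.Ioc (m*n) (m*n+n)).filter (fun j => ¬(j = 1 ∨ j % n ∈ S))).card ≤ r := by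
        have := sb_count n (by omega) S hS (m*n)
        omega
      have := sb_prod_le r (m*n) ((Finset.Ioc (m*n) (m*n+n)).filter (fun j => ¬(j = 1 ∨ j % n ∈ S)))
        hmn1
        (by intro j hj
            rw [Finset.mem_filter, Finset.mem_Ioc] at hj
            exact hj.1.1)
        hcount
      rw [hmncast] at this
      exact this
    have arith := sb_arith (r:ℝ) (m:ℝ) (sbV n k m) (sbP m) χ
      (∑ x ∈ Finset.Icc 1 (m*n), M x k) C Q
      hr' hm' (sbV_ge_one n k m) (sbP_ge_one m) hχ01
      (by rw [hncast] at ih; exact le_of_le_of_eq ih (by ring))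
      hC0 hCle hQ0 hQle
    refine le_trans fold (le_trans arith ?_)
    apply le_of_eq
    rw [sbP_succ m hm, sbV_succ n k m hm]
    have hchi : (if m*n+1 < k then (1:ℝ)/(m:ℝ) else 0) = χ/(m:ℝ) := by
      rw [hχdef]; split <;> simp
    rw [hchi, hncast]
    push_cast
    ring


/-- For an even modulus `n ≥ 2` and a stopping set of `{1}` together with `n/2` residue
classes mod `n`, the expected number of dead sticks of length `< k` satisfies
`M ℓ k ≤ 24 n² log k` for all `k ≥ 2n` and `ℓ > 1`. -/
theorem stmt_9 (n : ℕ) (hn : 2 ≤ n) (hne : Even n)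
    (S : Finset ℕ) (hS : S ⊆ Finset.range n) (hcard : S.card = n / 2)
    (M : ℕ → ℕ → ℝ)
    (hstop : ∀ ℓ k, 0 < ℓ → (ℓ = 1 ∨ ℓ % n ∈ S) → M ℓ k = if ℓ < k then 1 else 0)
    (hrec : ∀ ℓ k, 1 < ℓ → ¬(ℓ = 1 ∨ ℓ % n ∈ S) →
      M ℓ k = 2 / ((ℓ : ℝ) - 1) * ∑ x ∈ Finset.Icc 1 (ℓ - 1), M x k) :
    ∀ k ℓ, 2 * n ≤ k → 1 < ℓ → M ℓ k ≤ 24 * (n : ℝ) ^ 2 * Real.log k := by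
  intro k ℓ hk hℓ
  have hk4 : 4 ≤ k := by omega
  have hn' : (2:ℝ) ≤ (n:ℝ) := by exact_mod_cast hn
  set L := Real.log k with hL
  have hL1 : (1:ℝ) ≤ L := by
    have h4 : Real.log 4 ≤ L := by
      apply Real.log_le_log (by norm_num)
      exact_mod_cast hk4
    have h4' : Real.log 4 = 2 * Real.log 2 := by
      rw [show (4:ℝ) = 2^2 by norm_num, Real.log_pow]; push_cast; ring
    nlinarith [Real.log_two_gt_d9]
  have hpos := sb_nonneg n k S M hstop hrec
  have hmono : ∀ a b : ℕ, a ≤ b →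
      ∑ x ∈ Finset.Icc 1 a, M x k ≤ ∑ x ∈ Finset.Icc 1 b, M x k := by
    intro a b hab
    apply Finset.sum_le_sum_of_subset_of_nonneg (Finset.Icc_subset_Icc_right hab)
    intro i hi _
    exact hpos i (by rw [Finset.mem_Icc] at hi; omega)
  by_cases hsℓ : ℓ = 1 ∨ ℓ % n ∈ S
  · rw [hstop ℓ k (by omega) hsℓ]
    have : (1:ℝ) ≤ 24 * (n:ℝ)^2 * L := by nlinarith
    split <;> nlinarith
  · rw [hrec ℓ k hℓ hsℓ]
    have hℓ' : (2:ℝ) ≤ (ℓ:ℝ) := by exact_mod_cast hℓ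
    have hden : (0:ℝ) < (ℓ:ℝ) - 1 := by linarith
    by_cases hsmall : ℓ ≤ n + 1
    · -- small case : T (ℓ-1) ≤ (ℓ-1) * ((ℓ-1)*ℓ/2)
      have fold := sb_fold n k S M hstop hrec 0 (ℓ-1) (by omega)
      have hT0 : ∑ x ∈ Finset.Icc 1 0, M x k = 0 := by simp
      rw [hT0, zero_add] at fold
      set C := ∑ j ∈ Finset.Ioc 0 (ℓ-1), (if (j = 1 ∨ j % n ∈ S) ∧ j < k then (1:ℝ) else 0) with hCdef
      set Q := ∏ j ∈ Finset.Ioc 0 (ℓ-1), (if j = 1 ∨ j % n ∈ S then (1:ℝ) else ((j:ℝ)+1)/((j:ℝ)-1)) with hQdef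
      have hl1cast : ((ℓ-1:ℕ):ℝ) = (ℓ:ℝ) - 1 := by
        have : (1:ℕ) ≤ ℓ := by omega
        push_cast [this]; ring
      have hCle : C ≤ (ℓ:ℝ) - 1 := by
        calc C ≤ ∑ _j ∈ Finset.Ioc 0 (ℓ-1), (1:ℝ) := by
              apply Finset.sum_le_sum; intro j _; split <;> norm_num
          _ = ((ℓ-1:ℕ):ℝ) := by simp
          _ = (ℓ:ℝ) - 1 := hl1cast
      have hC0 : (0:ℝ) ≤ C := by
        apply Finset.sum_nonneg; intro j _; split <;> norm_num
      have hQ0 : (0:ℝ) ≤ Q := le_trans zero_le_one (sb_prod_ge_one n S _ _)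
      have hQle : Q ≤ ((1:ℝ)+((ℓ-2:ℕ):ℝ))*((1:ℝ)+((ℓ-2:ℕ):ℝ)+1)/((1:ℝ)*((1:ℝ)+1)) := by
        have hqe : Q = ∏ j ∈ (Finset.Ioc 0 (ℓ-1)).filter (fun j => ¬(j = 1 ∨ j % n ∈ S)),
            (((j:ℝ)+1)/((j:ℝ)-1)) := by
          rw [hQdef, Finset.prod_ite, Finset.prod_const_one, one_mul]
        rw [hqe]
        have hmem : ∀ j ∈ (Finset.Ioc 0 (ℓ-1)).filter (fun j => ¬(j = 1 ∨ j % n ∈ S)), 1 < j := by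
          intro j hj
          rw [Finset.mem_filter, Finset.mem_Ioc] at hj
          have : j ≠ 1 := fun h => hj.2 (Or.inl h)
          omega
        have hcd : ((Finset.Ioc 0 (ℓ-1)).filter (fun j => ¬(j = 1 ∨ j % n ∈ S))).card ≤ ℓ - 2 := by
          have hsub : (Finset.Ioc 0 (ℓ-1)).filter (fun j => ¬(j = 1 ∨ j % n ∈ S))
              ⊆ Finset.Ioc 1 (ℓ-1) := by
            intro j hj
            rw [Finset.mem_filter, Finset.mem_Ioc] at hj
            rw [Finset.mem_Ioc]
            have : j ≠ 1 := fun h => hj.2 (Or.inl h)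
            omega
          calc _ ≤ (Finset.Ioc 1 (ℓ-1)).card := Finset.card_le_card hsub
            _ = ℓ - 1 - 1 := Nat.card_Ioc 1 (ℓ-1)
            _ ≤ ℓ - 2 := by omega
        have hpl := sb_prod_le (ℓ-2) 1 _ (le_refl 1) hmem hcd
        simpa using hpl
      have hl2cast : ((ℓ-2:ℕ):ℝ) = (ℓ:ℝ) - 2 := by
        have : (2:ℕ) ≤ ℓ := by omega
        push_cast [this]; ring
      have hTb : ∑ x ∈ Finset.Icc 1 (ℓ-1), M x k ≤ ((ℓ:ℝ)-1) * (((ℓ:ℝ)-1)*(ℓ:ℝ)/2) := by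
        refine le_trans fold ?_
        have : ((1:ℝ)+((ℓ-2:ℕ):ℝ))*((1:ℝ)+((ℓ-2:ℕ):ℝ)+1)/((1:ℝ)*((1:ℝ)+1))
            = ((ℓ:ℝ)-1)*(ℓ:ℝ)/2 := by
          rw [hl2cast]; ring
        rw [this] at hQle
        apply mul_le_mul hCle hQle hQ0 (by linarith)
      have hnl : (ℓ:ℝ) ≤ (n:ℝ) + 1 := by exact_mod_cast hsmall
      calc 2 / ((ℓ:ℝ)-1) * ∑ x ∈ Finset.Icc 1 (ℓ-1), M x k
          ≤ 2 / ((ℓ:ℝ)-1) * (((ℓ:ℝ)-1) * (((ℓ:ℝ)-1)*(ℓ:ℝ)/2)) := by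
            apply mul_le_mul_of_nonneg_left hTb (by positivity)
        _ = ((ℓ:ℝ)-1)*(ℓ:ℝ) := by field_simp
        _ ≤ 24 * (n:ℝ)^2 * L := by nlinarith
    · -- large case
      have hnℓ : n + 2 ≤ ℓ := by omega
      obtain ⟨q, rr, hAB, hrr2⟩ : ∃ q rr, n*q + rr = ℓ-2 ∧ rr < n :=
        ⟨(ℓ-2)/n, (ℓ-2)%n, Nat.div_add_mod _ _, Nat.mod_lt _ (by omega)⟩
      set m := q + 1 with hm
      have hBeq : m * n = n * q + n := by rw [hm]; ring
      have hub : ℓ - 1 ≤ m * n := by omega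
      have hub2 : m * n ≤ 2 * (ℓ - 2) := by
        have hnle : n ≤ ℓ - 2 := by omega
        omega
      have hm1 : 1 ≤ m := by omega
      have hm' : (1:ℝ) ≤ (m:ℝ) := by exact_mod_cast hm1
      have hinv := sb_inv n k hn hne S hS hcard M hstop hrec hk m hm1
      have hVle := sbV_le n k m hn hk4
      have hPle := sbP_le' m hm1
      have hV1 := sbV_ge_one n k m
      have hP1 := sbP_ge_one m
      have hL0 : (0:ℝ) < L := by linarith
      have hTB : ∑ x ∈ Finset.Icc 1 (ℓ-1), M x k ≤ (n:ℝ)^3 * (m:ℝ) * (3*L) := by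
        calc ∑ x ∈ Finset.Icc 1 (ℓ-1), M x k ≤ ∑ x ∈ Finset.Icc 1 (m*n), M x k :=
              hmono _ _ hub
          _ ≤ (n:ℝ)^3 * m * sbV n k m * sbP m := hinv
          _ ≤ (n:ℝ)^3 * (m:ℝ) * (3*L) := by
              have hvp : sbV n k m * sbP m ≤ 3*L := by
                calc sbV n k m * sbP m ≤ (2*L) * (3/2) :=
                    mul_le_mul hVle hPle (by linarith) (by linarith)
                  _ = 3*L := by ring
              calc (n:ℝ)^3 * m * sbV n k m * sbP m
                  = ((n:ℝ)^3 * m) * (sbV n k m * sbP m) := by ring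
                _ ≤ ((n:ℝ)^3 * m) * (3*L) := by
                    apply mul_le_mul_of_nonneg_left hvp (by positivity)
      have hBcast : ((m*n:ℕ):ℝ) ≤ 2*((ℓ:ℝ) - 2) := by
        have h1 : ((m*n:ℕ):ℝ) ≤ ((2*(ℓ-2) : ℕ):ℝ) := by exact_mod_cast hub2
        have h2 : ((2*(ℓ-2):ℕ):ℝ) = 2*((ℓ:ℝ)-2) := by
          have : (2:ℕ) ≤ ℓ := by omega
          push_cast [this]; ring
        linarith
      have hkey : (n:ℝ)*(m:ℝ) ≤ 4*((ℓ:ℝ)-1) := by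
        have : ((m*n:ℕ):ℝ) = (m:ℝ)*(n:ℝ) := by push_cast; ring
        nlinarith
      calc 2 / ((ℓ:ℝ)-1) * ∑ x ∈ Finset.Icc 1 (ℓ-1), M x k
          ≤ 2 / ((ℓ:ℝ)-1) * ((n:ℝ)^3 * (m:ℝ) * (3*L)) :=
            mul_le_mul_of_nonneg_left hTB (le_of_lt (div_pos two_pos hden))
        _ ≤ 24 * (n:ℝ)^2 * L := by
            rw [div_mul_eq_mul_div, div_le_iff₀ hden]
            have hmul := mul_le_mul_of_nonneg_left hkey
              (show (0:ℝ) ≤ 6*(n:ℝ)^2*L by positivity)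
            linarith [hmul]
end

section
/- Fix modulus n ≥ 2 and a stopping set 𝔖 equal to {1} union more than n/2 residue classes mod n, with |S| > n/2 residue classes. Let M_L be the expected total number of dead sticks from the uniform discrete breaking process with stopping set 𝔖 started at length L (M_L = 1 for L ∈ 𝔖, M_L = (2/(L-1))∑_{ℓ=1}^{L-1} M_ℓ otherwise). Then M_L ≤ 2n² for all L ≥ 1. -/
private lemma sum_Icc_id_real (m : ℕ) :
    2 * (∑ ℓ ∈ Finset.Icc 1 m, (ℓ : ℝ)) = (m : ℝ) * ((m : ℝ) + 1) := by
  induction m with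
  | zero => simp
  | succ k ih =>
    rw [Finset.sum_Icc_succ_top (by omega : 1 ≤ k + 1)]
    push_cast
    push_cast at ih
    linarith [ih]

/-- For a stopping set of `{1}` together with more than `n/2` residue classes mod `n`,
the expected total number of dead sticks is at most `2 n²` for every starting length. -/
theorem stmt_10 (n : ℕ) (hn : 2 ≤ n)
    (S : Finset ℕ) (hS : S ⊆ Finset.range n) (hcard : n / 2 < S.card)
    (M : ℕ → ℝ)
    (hstop : ∀ L, 0 < L → (L = 1 ∨ L % n ∈ S) → M L = 1)
    (hrec : ∀ L, 1 < L → ¬(L = 1 ∨ L % n ∈ S) →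
      M L = 2 / ((L : ℝ) - 1) * ∑ ℓ ∈ Finset.Icc 1 (L - 1), M ℓ) :
    ∀ L, 1 ≤ L → M L ≤ 2 * (n : ℝ) ^ 2 := by
  -- linear bound : M L ≤ L
  have hlin : ∀ L, 1 ≤ L → M L ≤ (L : ℝ) := by
    intro L
    induction L using Nat.strong_induction_on with
    | _ L ih =>
      intro hL
      by_cases hstopL : L = 1 ∨ L % n ∈ S
      · rw [hstop L (by omega) hstopL]
        exact_mod_cast hL
      · have hL2 : 1 < L := by
          push_neg at hstopL
          omega
        rw [hrec L hL2 hstopL]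
        have hmpos : (0 : ℝ) < (L : ℝ) - 1 := by
          have : (2 : ℝ) ≤ (L : ℝ) := by exact_mod_cast hL2
          linarith
        rw [div_mul_eq_mul_div, div_le_iff₀ hmpos]
        have hsum : ∑ ℓ ∈ Finset.Icc 1 (L - 1), M ℓ
            ≤ ∑ ℓ ∈ Finset.Icc 1 (L - 1), (ℓ : ℝ) := by
          apply Finset.sum_le_sum
          intro ℓ hℓ
          rw [Finset.mem_Icc] at hℓ
          exact ih ℓ (by omega) hℓ.1
        have hg := sum_Icc_id_real (L - 1)
        have hc : ((L - 1 : ℕ) : ℝ) = (L : ℝ) - 1 := by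
          push_cast [Nat.cast_sub (by omega : 1 ≤ L)]
          ring
        rw [hc] at hg
        nlinarith [hsum, hg]
  intro L
  induction L using Nat.strong_induction_on with
  | _ L ih =>
    intro hL
    have hnR : (2 : ℝ) ≤ (n : ℝ) := by exact_mod_cast hn
    have h1n : (1 : ℝ) ≤ 2 * (n : ℝ) ^ 2 := by nlinarith
    by_cases hsmall : L ≤ 2 * n ^ 2
    · refine (hlin L hL).trans ?_
      have : (L : ℝ) ≤ ((2 * n ^ 2 : ℕ) : ℝ) := by exact_mod_cast hsmall
      push_cast at this
      linarith
    · push_neg at hsmall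
      have hn2 : 4 ≤ n ^ 2 := by nlinarith
      by_cases hstopL : L = 1 ∨ L % n ∈ S
      · rw [hstop L (by omega) hstopL]; exact h1n
      · have hL2 : 1 < L := by omega
        set m := L - 1 with hm_def
        set A := (Finset.Icc 1 m).filter (fun ℓ => ℓ = 1 ∨ ℓ % n ∈ S) with hA_def
        set B := (Finset.Icc 1 m).filter (fun ℓ => ¬(ℓ = 1 ∨ ℓ % n ∈ S)) with hB_def
        set d := n - S.card with hd_def
        set q := m / n with hq_def
        -- card of B
        have hScard : S.card ≤ n := by
          have := Finset.card_le_card hS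
          simpa using this
        have hBcard : B.card ≤ d * (q + 1) := by
          have hmem : ∀ ℓ ∈ B, (fun ℓ => (ℓ % n, ℓ / n)) ℓ ∈
              (Finset.range n \ S) ×ˢ Finset.range (q + 1) := by
            intro ℓ hℓ
            rw [hB_def, Finset.mem_filter, Finset.mem_Icc] at hℓ
            obtain ⟨⟨h1, h2⟩, h3⟩ := hℓ
            push_neg at h3
            simp only [Finset.mem_product, Finset.mem_sdiff, Finset.mem_range]
            refine ⟨⟨Nat.mod_lt _ (by omega), h3.2⟩, ?_⟩
            exact Nat.lt_succ_of_le (Nat.div_le_div_right h2)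
          have hinj : Set.InjOn (fun ℓ => (ℓ % n, ℓ / n)) B := by
            intro a _ b _ hab
            have h1 : a % n = b % n := congrArg Prod.fst hab
            have h2 : a / n = b / n := congrArg Prod.snd hab
            have ha := Nat.mod_add_div a n
            have hb := Nat.mod_add_div b n
            rw [h1, h2] at ha
            omega
          have := Finset.card_le_card_of_injOn _ hmem hinj
          rwa [Finset.card_product, Finset.card_sdiff_of_subset hS, Finset.card_range, Finset.card_range] at this
        have hAcard : A.card ≤ m := by
          have := Finset.card_filter_le (Finset.Icc 1 m) (fun ℓ => ℓ = 1 ∨ ℓ % n ∈ S)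
          rwa [Nat.card_Icc, Nat.add_sub_cancel] at this
        -- numeric facts over ℝ
        have hmL : 2 * n ^ 2 ≤ m := by omega
        have hdn : 2 * d + 1 ≤ n := by omega
        have hmR : 2 * (n : ℝ) ^ 2 ≤ (m : ℝ) := by exact_mod_cast hmL
        have hdR : 2 * (d : ℝ) ≤ (n : ℝ) - 1 := by
          have : ((2 * d + 1 : ℕ) : ℝ) ≤ (n : ℝ) := by exact_mod_cast hdn
          push_cast at this
          linarith
        have hBcR : (B.card : ℝ) ≤ (d : ℝ) * ((q : ℝ) + 1) := by
          have : ((B.card : ℕ) : ℝ) ≤ ((d * (q + 1) : ℕ) : ℝ) := by exact_mod_cast hBcard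
          push_cast at this
          linarith
        have hqR : (n : ℝ) * (q : ℝ) ≤ (m : ℝ) := by
          have h := Nat.div_mul_le_self m n
          have : ((q * n : ℕ) : ℝ) ≤ (m : ℝ) := by exact_mod_cast h
          push_cast at this
          linarith
        have hq0 : (0 : ℝ) ≤ (q : ℝ) := Nat.cast_nonneg _
        have hd0 : (0 : ℝ) ≤ (d : ℝ) := Nat.cast_nonneg _
        -- the key inequality
        have key : (m : ℝ) + (B.card : ℝ) * (2 * (n : ℝ) ^ 2) ≤ (n : ℝ) ^ 2 * (m : ℝ) := by
          have h1 : (B.card : ℝ) * (2 * (n : ℝ) ^ 2)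
              ≤ ((d : ℝ) * ((q : ℝ) + 1)) * (2 * (n : ℝ) ^ 2) :=
            mul_le_mul_of_nonneg_right hBcR (by positivity)
          have h2 : (2 * (d : ℝ)) * ((n : ℝ) ^ 2 * ((q : ℝ) + 1))
              ≤ (((n : ℝ) - 1)) * ((n : ℝ) ^ 2 * ((q : ℝ) + 1)) :=
            mul_le_mul_of_nonneg_right hdR (by positivity)
          have h3 : (((n : ℝ) - 1) * (n : ℝ)) * ((n : ℝ) * (q : ℝ))
              ≤ (((n : ℝ) - 1) * (n : ℝ)) * (m : ℝ) :=
            mul_le_mul_of_nonneg_left hqR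
              (by nlinarith)
          have h4 : (0 : ℝ) ≤ ((n : ℝ) - 1) * ((m : ℝ) - (n : ℝ) ^ 2) := by
            apply mul_nonneg <;> nlinarith
          linarith [h1, h2, h3, h4]
        -- put it together
        rw [hrec L hL2 hstopL]
        have hmpos : (0 : ℝ) < (L : ℝ) - 1 := by
          have : (2 : ℝ) ≤ (L : ℝ) := by exact_mod_cast hL2
          linarith
        rw [div_mul_eq_mul_div, div_le_iff₀ hmpos]
        have hsplit : ∑ ℓ ∈ A, M ℓ + ∑ ℓ ∈ B, M ℓ = ∑ ℓ ∈ Finset.Icc 1 m, M ℓ :=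
          Finset.sum_filter_add_sum_filter_not _ _ M
        have hAsum : ∑ ℓ ∈ A, M ℓ = (A.card : ℝ) := by
          rw [Finset.sum_congr rfl (fun ℓ hℓ => ?_), Finset.sum_const, nsmul_eq_mul, mul_one]
          rw [hA_def, Finset.mem_filter, Finset.mem_Icc] at hℓ
          exact hstop ℓ (by omega) hℓ.2
        have hBsum : ∑ ℓ ∈ B, M ℓ ≤ (B.card : ℝ) * (2 * (n : ℝ) ^ 2) := by
          have := Finset.sum_le_card_nsmul B M (2 * (n : ℝ) ^ 2) (fun ℓ hℓ => ?_)
          · rwa [nsmul_eq_mul] at this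
          · rw [hB_def, Finset.mem_filter, Finset.mem_Icc] at hℓ
            exact ih ℓ (by omega) (by omega)
        have hAcR : (A.card : ℝ) ≤ (m : ℝ) := by exact_mod_cast hAcard
        have hcm : ((m : ℕ) : ℝ) = (L : ℝ) - 1 := by
          rw [hm_def]
          push_cast [Nat.cast_sub (by omega : 1 ≤ L)]
          ring
        rw [← hcm]
        calc 2 * ∑ ℓ ∈ Finset.Icc 1 m, M ℓ
            = 2 * (∑ ℓ ∈ A, M ℓ + ∑ ℓ ∈ B, M ℓ) := by rw [hsplit]
          _ ≤ 2 * ((m : ℝ) + (B.card : ℝ) * (2 * (n : ℝ) ^ 2)) := by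
              rw [hAsum]; linarith
          _ ≤ 2 * ((n : ℝ) ^ 2 * (m : ℝ)) := by linarith
          _ = 2 * (n : ℝ) ^ 2 * (m : ℝ) := by ring
end

section
/- Fix modulus n and a stopping set 𝔖 consisting of fewer than n/2 residue classes mod n together with {1} (|S| < n/2). Set c = 1/(2n+1) and m = 2n². Let M_L and M_{L,m} denote respectively the expected total number of dead sticks and the expected number of dead sticks of length less than m from the uniform discrete breaking process with stopping set 𝔖 started at length L. Then for all L ∉ 𝔖, M_{L,m} ≥ c·M_L + 1. -/
open Finset

/-- Within a fixed residue class and a fixed "shifted block", positive naturals coincide. -/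
lemma stmt11_inj_aux (n : ℕ) (hn : 0 < n) {a b : ℕ} (ha : 1 ≤ a) (hb : 1 ≤ b) (hab : a ≤ b)
    (h1 : a % n = b % n) (h2 : (a - 1) / n = (b - 1) / n) : a = b := by
  have hd : n ∣ b - a := (Nat.modEq_iff_dvd' hab).mp h1
  have h3 : (b - 1) / n * n ≤ a - 1 := by
    rw [← h2]; exact Nat.div_mul_le_self (a - 1) n
  have h4 : b - 1 < n * ((b - 1) / n + 1) := Nat.lt_mul_div_succ _ hn
  have h5 : b - 1 < (a - 1) + n := by
    have : n * ((b - 1) / n + 1) = (b - 1) / n * n + n := by ring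
    rw [this] at h4
    omega
  have h6 : b - a < n := by omega
  have := Nat.eq_zero_of_dvd_of_lt hd h6
  omega

/-- Count of elements in `[1, L-1]` with residue in `S` is at most `|S| * ((L-2)/n + 1)`. -/
lemma stmt11_card_res (n L : ℕ) (hn : 0 < n) (S : Finset ℕ) :
    ((Finset.Icc 1 (L - 1)).filter (fun ℓ => ℓ % n ∈ S)).card
      ≤ S.card * ((L - 2) / n + 1) := by
  have h := Finset.card_le_card_of_injOn
      (s := (Finset.Icc 1 (L - 1)).filter (fun ℓ => ℓ % n ∈ S))
      (f := fun ℓ => ((ℓ : ℕ) % n, (ℓ - 1) / n))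
      (t := S ×ˢ Finset.range ((L - 2) / n + 1)) ?_ ?_
  · simpa [Finset.card_product] using h
  · intro ℓ hℓ
    simp only [Finset.mem_coe, Finset.mem_filter, Finset.mem_Icc] at hℓ
    simp only [Finset.mem_coe, Finset.mem_product, Finset.mem_range]
    refine ⟨hℓ.2, ?_⟩
    have : ℓ - 1 ≤ L - 2 := by omega
    have := Nat.div_le_div_right (c := n) this
    omega
  · intro a ha b hb hab
    simp only [Finset.mem_coe, Finset.mem_filter, Finset.mem_Icc] at ha hb
    simp only [Prod.mk.injEq] at hab
    rcases le_total a b with h | h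
    · exact stmt11_inj_aux n hn ha.1.1 hb.1.1 h hab.1 hab.2
    · exact (stmt11_inj_aux n hn hb.1.1 ha.1.1 h hab.1.symm hab.2.symm).symm

set_option maxHeartbeats 1000000 in
/-- For a stopping set of `{1}` together with fewer than `n/2` residue classes mod `n`,
with `c = 1/(2n+1)` and `m = 2n²`, the expected number of dead sticks of length `< m`
satisfies `M_{L,m} ≥ c M_L + 1` for all `L ∉ 𝔖`. -/
theorem stmt_11 (n : ℕ) (hn : 2 ≤ n)
    (S : Finset ℕ) (hS : S ⊆ Finset.range n) (hcard : 2 * S.card < n)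
    (M Mm : ℕ → ℝ)
    (hMstop : ∀ L, 0 < L → (L = 1 ∨ L % n ∈ S) → M L = 1)
    (hMrec : ∀ L, 1 < L → ¬(L = 1 ∨ L % n ∈ S) →
      M L = 2 / ((L : ℝ) - 1) * ∑ ℓ ∈ Finset.Icc 1 (L - 1), M ℓ)
    (hMmstop : ∀ L, 0 < L → (L = 1 ∨ L % n ∈ S) → Mm L = if L < 2 * n ^ 2 then 1 else 0)
    (hMmrec : ∀ L, 1 < L → ¬(L = 1 ∨ L % n ∈ S) →
      Mm L = 2 / ((L : ℝ) - 1) * ∑ ℓ ∈ Finset.Icc 1 (L - 1), Mm ℓ) :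
    ∀ L, 0 < L → ¬(L = 1 ∨ L % n ∈ S) →
      (1 / (2 * (n : ℝ) + 1)) * M L + 1 ≤ Mm L := by
  classical
  intro L
  induction L using Nat.strong_induction_on with
  | _ L IH =>
  intro hL hstop
  have hne : L ≠ 1 := fun h => hstop (Or.inl h)
  have hL2 : 2 ≤ L := by omega
  have hn0 : 0 < n := by omega
  set c : ℝ := 1 / (2 * (n : ℝ) + 1) with hc
  have hnR : (2:ℝ) ≤ (n:ℝ) := by exact_mod_cast hn
  have h2n1 : (0:ℝ) < 2 * (n:ℝ) + 1 := by linarith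
  have hc0 : 0 < c := by rw [hc]; positivity
  have hc2 : c ≤ 1/2 := by
    rw [hc, div_le_div_iff₀ h2n1 (by norm_num)]; linarith
  have hLR : (2:ℝ) ≤ (L:ℝ) := by exact_mod_cast hL2
  have hpos : (0:ℝ) < (L:ℝ) - 1 := by linarith
  -- per-term facts
  have term_stop : ∀ ℓ ∈ Finset.Icc 1 (L-1), (ℓ = 1 ∨ ℓ % n ∈ S) →
      Mm ℓ - c * M ℓ = (if ℓ < 2 * n ^ 2 then (1:ℝ) else 0) - c := by
    intro ℓ hℓ hs
    have h1 : 0 < ℓ := (Finset.mem_Icc.mp hℓ).1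
    rw [hMstop ℓ h1 hs, hMmstop ℓ h1 hs]; ring
  have term_not : ∀ ℓ ∈ Finset.Icc 1 (L-1), ¬(ℓ = 1 ∨ ℓ % n ∈ S) →
      1 ≤ Mm ℓ - c * M ℓ := by
    intro ℓ hℓ hns
    have h := Finset.mem_Icc.mp hℓ
    have := IH ℓ (by omega) (by omega) hns
    linarith
  -- the key summed inequality
  have key : ((L:ℝ)-1)/2 ≤ ∑ ℓ ∈ Finset.Icc 1 (L-1), (Mm ℓ - c * M ℓ) := by
    have hcardIcc : (Finset.Icc 1 (L-1)).card = L - 1 := by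
      rw [Nat.card_Icc]; omega
    rcases le_or_gt L (2 * n ^ 2) with hLm | hLm
    · -- small case: every term is at least 1 - c
      have hterm : ∀ ℓ ∈ Finset.Icc 1 (L-1), (1 - c) ≤ Mm ℓ - c * M ℓ := by
        intro ℓ hℓ
        by_cases hs : ℓ = 1 ∨ ℓ % n ∈ S
        · rw [term_stop ℓ hℓ hs, if_pos]
          have := (Finset.mem_Icc.mp hℓ).2; omega
        · linarith [term_not ℓ hℓ hs]
      have hsum := Finset.card_nsmul_le_sum _ _ _ hterm
      rw [hcardIcc, nsmul_eq_mul] at hsum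
      have hcast : ((L - 1 : ℕ) : ℝ) = (L:ℝ) - 1 := by
        have : (1:ℕ) ≤ L := by omega
        push_cast [Nat.cast_sub this]; ring
      rw [hcast] at hsum
      nlinarith
    · -- large case
      set P : ℕ → Prop := fun ℓ => ℓ = 1 ∨ ℓ % n ∈ S with hP
      rw [← Finset.sum_filter_add_sum_filter_not (Finset.Icc 1 (L-1)) P]
      set T := (Finset.Icc 1 (L-1)).filter P with hT
      set D := (Finset.Icc 1 (L-1)).filter (fun ℓ => ¬ P ℓ) with hD
      have hTsum : (T.card : ℝ) * (-c) ≤ ∑ ℓ ∈ T, (Mm ℓ - c * M ℓ) := by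
        have := Finset.card_nsmul_le_sum T (fun ℓ => Mm ℓ - c * M ℓ) (-c) ?_
        · rwa [nsmul_eq_mul] at this
        · intro ℓ hℓ
          have hm := Finset.mem_filter.mp hℓ
          show -c ≤ Mm ℓ - c * M ℓ
          rw [term_stop ℓ hm.1 hm.2]
          split <;> linarith
      have hDsum : (D.card : ℝ) ≤ ∑ ℓ ∈ D, (Mm ℓ - c * M ℓ) := by
        have := Finset.card_nsmul_le_sum D (fun ℓ => Mm ℓ - c * M ℓ) 1 ?_
        · rwa [nsmul_eq_mul, mul_one] at this
        · intro ℓ hℓ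
          have hm := Finset.mem_filter.mp hℓ
          show (1:ℝ) ≤ Mm ℓ - c * M ℓ
          exact term_not ℓ hm.1 hm.2
      have hcards : T.card + D.card = L - 1 := by
        rw [hT, hD, Finset.card_filter_add_card_filter_not, hcardIcc]
      have hTcard : T.card ≤ 1 + S.card * ((L - 2) / n + 1) := by
        have hsub : T ⊆ insert 1 ((Finset.Icc 1 (L-1)).filter (fun ℓ => ℓ % n ∈ S)) := by
          intro ℓ hℓ
          have hm := Finset.mem_filter.mp hℓ
          rcases hm.2 with h | h
          · simp [h]
          · simp [Finset.mem_insert, Finset.mem_filter, hm.1, h]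
        calc T.card ≤ _ := Finset.card_le_card hsub
          _ ≤ _ + 1 := Finset.card_insert_le _ _
          _ ≤ 1 + S.card * ((L - 2) / n + 1) := by
              have := stmt11_card_res n L hn0 S; omega
      -- now reals
      set t : ℕ := T.card
      set d : ℕ := D.card
      set q : ℕ := (L - 2) / n with hq
      set s : ℕ := S.card
      have hqn : (q:ℝ) * n ≤ (L:ℝ) - 2 := by
        have h1 : q * n ≤ L - 2 := Nat.div_mul_le_self (L - 2) n
        have h2 : ((L - 2 : ℕ) : ℝ) = (L:ℝ) - 2 := by
          have : (2:ℕ) ≤ L := hL2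
          push_cast [Nat.cast_sub this]; ring
        calc ((q:ℝ) * n) = ((q * n : ℕ) : ℝ) := by push_cast; ring
          _ ≤ ((L - 2 : ℕ) : ℝ) := by exact_mod_cast h1
          _ = (L:ℝ) - 2 := h2
      have htR : (t:ℝ) ≤ 1 + (s:ℝ) * ((q:ℝ) + 1) := by
        calc (t:ℝ) ≤ ((1 + s * (q + 1) : ℕ) : ℝ) := by exact_mod_cast hTcard
          _ = 1 + (s:ℝ) * ((q:ℝ) + 1) := by push_cast; ring
      have hdR : (t:ℝ) + (d:ℝ) = (L:ℝ) - 1 := by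
        have h1 : ((t + d : ℕ) : ℝ) = ((L - 1 : ℕ) : ℝ) := by rw [hcards]
        push_cast [Nat.cast_sub (show (1:ℕ) ≤ L by omega)] at h1
        linarith
      have hsR : 2 * (s:ℝ) ≤ (n:ℝ) - 1 := by
        have : 2 * s ≤ n - 1 := by omega
        have h2 : ((2 * s : ℕ) : ℝ) ≤ ((n - 1 : ℕ) : ℝ) := by exact_mod_cast this
        push_cast [Nat.cast_sub (show (1:ℕ) ≤ n by omega)] at h2
        linarith
      have hLmR : 2 * (n:ℝ)^2 + 1 ≤ (L:ℝ) := by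
        have : 2 * n ^ 2 + 1 ≤ L := hLm
        exact_mod_cast this
      have hq0 : (0:ℝ) ≤ (q:ℝ) := Nat.cast_nonneg q
      have hs0 : (0:ℝ) ≤ (s:ℝ) := Nat.cast_nonneg s
      have ht0 : (0:ℝ) ≤ (t:ℝ) := Nat.cast_nonneg t
      -- the arithmetic core: (2n+1)(L-1) ≥ (4n+4) t
      have core : (4 * (n:ℝ) + 4) * t ≤ (2 * (n:ℝ) + 1) * ((L:ℝ) - 1) := by
        nlinarith [mul_nonneg (by linarith : (0:ℝ) ≤ (n:ℝ) - 1 - 2 * s) (by linarith : (0:ℝ) ≤ (q:ℝ) + 1),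
          mul_nonneg (by linarith : (0:ℝ) ≤ (L:ℝ) - 2 - (q:ℝ) * n) (by linarith : (0:ℝ) ≤ (n:ℝ) - 1),
          mul_nonneg (by linarith : (0:ℝ) ≤ (L:ℝ) - 2 * (n:ℝ)^2 - 1) (by linarith : (0:ℝ) ≤ (n:ℝ) + 2),
          mul_nonneg (by linarith : (0:ℝ) ≤ (n:ℝ) - 2) (by linarith : (0:ℝ) ≤ (n:ℝ)),
          mul_nonneg hs0 hq0, mul_nonneg ht0 (by linarith : (0:ℝ) ≤ (n:ℝ))]
      have final : ((L:ℝ)-1)/2 ≤ (d:ℝ) + (t:ℝ) * (-c) := by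
        have hdval : (d:ℝ) = (L:ℝ) - 1 - t := by linarith
        have hX : (d:ℝ) + (t:ℝ) * (-c) - ((L:ℝ)-1)/2
            = ((2*(n:ℝ)+1)*((L:ℝ)-1) - (4*(n:ℝ)+4)*(t:ℝ)) / (2*(2*(n:ℝ)+1)) := by
          rw [hdval, hc]; field_simp; ring
        have h0 : (0:ℝ) ≤ ((2*(n:ℝ)+1)*((L:ℝ)-1) - (4*(n:ℝ)+4)*(t:ℝ)) / (2*(2*(n:ℝ)+1)) :=
          div_nonneg (by linarith [core]) (by linarith)
        linarith [hX, h0]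
      calc ((L:ℝ)-1)/2 ≤ (d:ℝ) + (t:ℝ) * (-c) := final
        _ ≤ _ := by
          have := add_le_add hTsum hDsum
          linarith
  -- finish: unfold the recursion
  rw [hMrec L (by omega) hstop, hMmrec L (by omega) hstop]
  rw [Finset.sum_sub_distrib, ← Finset.mul_sum] at key
  set A := ∑ ℓ ∈ Finset.Icc 1 (L-1), M ℓ
  set B := ∑ ℓ ∈ Finset.Icc 1 (L-1), Mm ℓ
  have h2L : (0:ℝ) < 2 / ((L:ℝ) - 1) := by positivity
  have hmul := mul_le_mul_of_nonneg_left key (le_of_lt h2L)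
  have hone : 2 / ((L:ℝ) - 1) * (((L:ℝ)-1)/2) = 1 := by
    field_simp
  nlinarith [hmul, hone]
end

section
/- Consider a branching process in which n_0 = R and, at each level, each of the n_i live sticks independently produces a Binomial(k, 1/k) number of live children, so n_{i+1} ~ Binomial(n_i k, 1/k) conditionally on n_i. Then for every i ≥ 0 and every 0 < t < R, P(|n_i - R| ≤ t) ≥ 1 - 2i³R(k-1)/(t²k). -/
lemma bsum0 (x y : ℝ) (h : x + y = 1) (m : ℕ) :
    ∑ b ∈ Finset.range (m+1), (m.choose b : ℝ) * x^b * y^(m-b) = 1 := by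
  have h2 := add_pow x y m
  rw [h, one_pow] at h2
  rw [h2]
  exact Finset.sum_congr rfl (fun b _ => by ring)

lemma bsum1 (x y : ℝ) (h : x + y = 1) (m : ℕ) :
    ∑ b ∈ Finset.range (m+1), (b : ℝ) * (m.choose b : ℝ) * x^b * y^(m-b) = m * x := by
  cases m with
  | zero => simp
  | succ M =>
    rw [Finset.sum_range_succ']
    simp only [Nat.cast_zero, zero_mul, mul_zero, add_zero]
    have key : ∀ c, ((c+1 : ℕ) : ℝ) * ((M+1).choose (c+1) : ℝ) = ((M+1 : ℕ) : ℝ) * (M.choose c : ℝ) := by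
      intro c
      have := Nat.add_one_mul_choose_eq M c
      have : ((M.succ * M.choose c : ℕ) : ℝ) = (((M+1).choose (c+1) * (c+1) : ℕ) : ℝ) := by
        exact_mod_cast congrArg Nat.cast this
      push_cast at this ⊢
      linarith
    have : ∑ c ∈ Finset.range (M+1), ((c+1 : ℕ) : ℝ) * ((M+1).choose (c+1) : ℝ) * x^(c+1) * y^(M+1-(c+1))
        = ((M+1:ℕ):ℝ) * x * ∑ c ∈ Finset.range (M+1), (M.choose c : ℝ) * x^c * y^(M-c) := by
      rw [Finset.mul_sum]
      refine Finset.sum_congr rfl (fun c _ => ?_)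
      rw [key c]
      have hs : M + 1 - (c+1) = M - c := by omega
      rw [hs]; ring
    rw [this, bsum0 x y h]
    push_cast; ring

lemma bsum2 (x y : ℝ) (h : x + y = 1) (m : ℕ) :
    ∑ b ∈ Finset.range (m+1), (b : ℝ) * ((b:ℝ) - 1) * (m.choose b : ℝ) * x^b * y^(m-b)
      = m * ((m:ℝ) - 1) * x^2 := by
  cases m with
  | zero => simp
  | succ M =>
    rw [Finset.sum_range_succ']
    simp only [Nat.cast_zero, zero_mul, mul_zero, add_zero]
    have key : ∀ c, ((c+1 : ℕ) : ℝ) * ((M+1).choose (c+1) : ℝ) = ((M+1 : ℕ) : ℝ) * (M.choose c : ℝ) := by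
      intro c
      have := Nat.add_one_mul_choose_eq M c
      have : ((M.succ * M.choose c : ℕ) : ℝ) = (((M+1).choose (c+1) * (c+1) : ℕ) : ℝ) := by
        exact_mod_cast congrArg Nat.cast this
      push_cast at this ⊢
      linarith
    have : ∑ c ∈ Finset.range (M+1), ((c+1 : ℕ) : ℝ) * (((c:ℝ)+1) - 1) * ((M+1).choose (c+1) : ℝ) * x^(c+1) * y^(M+1-(c+1))
        = ((M+1:ℕ):ℝ) * x * ∑ c ∈ Finset.range (M+1), (c:ℝ) * (M.choose c : ℝ) * x^c * y^(M-c) := by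
      rw [Finset.mul_sum]
      refine Finset.sum_congr rfl (fun c _ => ?_)
      have hk := key c
      have hs : M + 1 - (c+1) = M - c := by omega
      push_cast at hk ⊢
      linear_combination ((c:ℝ) * x^(c+1) * y^(M-c)) * hk
    push_cast at this ⊢
    rw [this, bsum1 x y h]
    push_cast; ring

open MeasureTheory ProbabilityTheory

set_option maxHeartbeats 1000000 in
/-- Stability of the critical binomial branching process: if `n 0 = R` and, conditionally
on `n i = a`, `n (i+1)` is `Binomial(a k, 1/k)`, then
`P(|n i - R| ≤ t) ≥ 1 - 2 i³ R (k-1)/(t² k)` for `0 < t < R`. -/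
theorem stmt_17 {Ω : Type*} [MeasureSpace Ω] [IsProbabilityMeasure (ℙ : Measure Ω)]
    (k R : ℕ) (hk : 2 ≤ k) (hR : 0 < R)
    (n : ℕ → Ω → ℕ) (hmeas : ∀ i, Measurable (n i))
    (h0 : ∀ ω, n 0 ω = R)
    (hbin : ∀ i a, ℙ {ω | n i ω = a} ≠ 0 → ∀ b,
      ((ProbabilityTheory.cond ℙ {ω | n i ω = a}) {ω | n (i + 1) ω = b}).toReal =
        (Nat.choose (a * k) b : ℝ) * (1 / k) ^ b * (1 - 1 / (k : ℝ)) ^ (a * k - b)) :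
    ∀ (i : ℕ) (t : ℝ), 0 < t → t < R →
      1 - 2 * (i : ℝ) ^ 3 * R * ((k : ℝ) - 1) / (t ^ 2 * k) ≤
        (ℙ {ω | |(n i ω : ℝ) - R| ≤ t}).toReal := by
  classical
  have hms : ∀ i b, MeasurableSet {ω | n i ω = b} :=
    fun i b => hmeas i (measurableSet_singleton b)
  have decomp2 : ∀ (i B : ℕ), (∀ b, B < b → ℙ {ω | n i ω = b} = 0) →
      ∀ (E : Set Ω), MeasurableSet E →
      ℙ E = ∑ b ∈ Finset.range (B+1), ℙ (E ∩ {ω | n i ω = b}) := by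
    intro i B hB E hE
    have hcover : E = ⋃ b, E ∩ {ω | n i ω = b} := by
      ext ω
      constructor
      · intro h; exact Set.mem_iUnion.2 ⟨n i ω, h, rfl⟩
      · intro h; obtain ⟨b, hb, _⟩ := Set.mem_iUnion.1 h; exact hb
    have hd : Pairwise (fun a b : ℕ => Disjoint (E ∩ {ω | n i ω = a}) (E ∩ {ω | n i ω = b})) := by
      intro a b hab
      refine Set.disjoint_left.2 (fun ω h1 h2 => hab ?_)
      exact h1.2.symm.trans h2.2
    have hm : ∀ b, MeasurableSet (E ∩ {ω | n i ω = b}) := fun b => hE.inter (hms i b)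
    conv_lhs => rw [hcover]
    rw [measure_iUnion hd hm]
    exact (tsum_eq_sum (fun b (hb : b ∉ Finset.range (B+1)) =>
      measure_mono_null Set.inter_subset_right (hB b (by simpa using hb))))
  have joint : ∀ i a b, (ℙ ({ω | n (i+1) ω = b} ∩ {ω | n i ω = a})).toReal
      = (ℙ {ω | n i ω = a}).toReal *
        (((a*k).choose b : ℝ) * (1/(k:ℝ))^b * (1-1/(k:ℝ))^(a*k-b)) := by
    intro i a b
    by_cases h : ℙ {ω | n i ω = a} = 0
    · rw [measure_mono_null Set.inter_subset_right h]
      simp [h]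
    · have hc := hbin i a h b
      rw [cond_apply (hms i a), ENNReal.toReal_mul, ENNReal.toReal_inv] at hc
      rw [Set.inter_comm, ← hc]
      have hne : (ℙ {ω | n i ω = a}).toReal ≠ 0 :=
        ENNReal.toReal_ne_zero.2 ⟨h, measure_ne_top _ _⟩
      field_simp
  have jointzero : ∀ i a b, a * k < b → ℙ ({ω | n (i+1) ω = b} ∩ {ω | n i ω = a}) = 0 := by
    intro i a b hab
    have h1 := joint i a b
    rw [Nat.choose_eq_zero_of_lt hab] at h1
    simp only [Nat.cast_zero, zero_mul, mul_zero] at h1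
    exact (ENNReal.toReal_eq_zero_iff _).1 h1 |>.resolve_right (measure_ne_top _ _)
  have bound : ∀ i b, R * k^i < b → ℙ {ω | n i ω = b} = 0 := by
    intro i
    induction i with
    | zero =>
      intro b hb
      have : {ω | n 0 ω = b} = ∅ := by
        ext ω; simp only [Set.mem_setOf_eq, Set.mem_empty_iff_false, iff_false, h0 ω]
        simp at hb; omega
      rw [this]; exact measure_empty
    | succ i ih =>
      intro b hb
      rw [decomp2 i (R * k^i) ih _ (hms (i+1) b)]
      refine Finset.sum_eq_zero (fun a ha => ?_)
      refine jointzero i a b ?_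
      have ha' : a ≤ R * k^i := by simpa using Nat.lt_succ_iff.1 (Finset.mem_range.1 ha)
      have : a * k ≤ R * k^(i+1) := by
        calc a * k ≤ R * k^i * k := Nat.mul_le_mul_right k ha'
        _ = R * k^(i+1) := by ring
      omega
  have prec : ∀ i b, (ℙ {ω | n (i+1) ω = b}).toReal
      = ∑ a ∈ Finset.range (R*k^i+1), (ℙ {ω | n i ω = a}).toReal *
          (((a*k).choose b : ℝ) * (1/(k:ℝ))^b * (1-1/(k:ℝ))^(a*k-b)) := by
    intro i b
    rw [decomp2 i (R*k^i) (fun c hc => bound i c hc) _ (hms (i+1) b),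
      ENNReal.toReal_sum (fun a _ => measure_ne_top _ _)]
    exact Finset.sum_congr rfl (fun a _ => joint i a b)
  have hkpos : (0:ℝ) < k := by exact_mod_cast Nat.lt_of_lt_of_le Nat.zero_lt_two hk
  have hk0 : (k:ℝ) ≠ 0 := ne_of_gt hkpos
  have hxy : (1/(k:ℝ)) + (1 - 1/(k:ℝ)) = 1 := by ring
  have swap : ∀ (i : ℕ) (g : ℕ → ℝ),
      ∑ b ∈ Finset.range (R*k^(i+1)+1), g b * (ℙ {ω | n (i+1) ω = b}).toReal
      = ∑ a ∈ Finset.range (R*k^i+1), (ℙ {ω | n i ω = a}).toReal *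
          (∑ b ∈ Finset.range (a*k+1), g b *
            (((a*k).choose b : ℝ) * (1/(k:ℝ))^b * (1-1/(k:ℝ))^(a*k-b))) := by
    intro i g
    have h1 : ∑ b ∈ Finset.range (R*k^(i+1)+1), g b * (ℙ {ω | n (i+1) ω = b}).toReal
        = ∑ b ∈ Finset.range (R*k^(i+1)+1), ∑ a ∈ Finset.range (R*k^i+1),
            (ℙ {ω | n i ω = a}).toReal *
              (g b * (((a*k).choose b : ℝ) * (1/(k:ℝ))^b * (1-1/(k:ℝ))^(a*k-b))) := by
      refine Finset.sum_congr rfl (fun b _ => ?_)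
      rw [prec i b, Finset.mul_sum]
      exact Finset.sum_congr rfl (fun a _ => by ring)
    rw [h1, Finset.sum_comm]
    refine Finset.sum_congr rfl (fun a ha => ?_)
    rw [Finset.mul_sum]
    have ha' : a ≤ R * k^i := Nat.lt_succ_iff.1 (Finset.mem_range.1 ha)
    have hsub : Finset.range (a*k+1) ⊆ Finset.range (R*k^(i+1)+1) := by
      apply Finset.range_subset_range.2
      have : a * k ≤ R * k^i * k := Nat.mul_le_mul_right k ha'
      have h2 : R * k^i * k = R * k^(i+1) := by ring
      omega
    refine (Finset.sum_subset hsub (fun b _ hb => ?_)).symm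
    have hb' : a * k < b := by
      simp only [Finset.mem_range, not_lt] at hb; omega
    rw [Nat.choose_eq_zero_of_lt hb']
    simp
  have inner0 : ∀ m : ℕ, ∑ b ∈ Finset.range (m+1),
      (1:ℝ) * ((m.choose b:ℝ) * (1/(k:ℝ))^b * (1-1/(k:ℝ))^(m-b)) = 1 := by
    intro m
    refine Eq.trans ?_ (bsum0 (1/(k:ℝ)) (1-1/(k:ℝ)) hxy m)
    exact Finset.sum_congr rfl (fun b _ => by ring)
  have inner1 : ∀ m : ℕ, ∑ b ∈ Finset.range (m+1),
      (b:ℝ) * ((m.choose b:ℝ) * (1/(k:ℝ))^b * (1-1/(k:ℝ))^(m-b)) = (m:ℝ) * (1/(k:ℝ)) := by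
    intro m
    refine Eq.trans ?_ (bsum1 (1/(k:ℝ)) (1-1/(k:ℝ)) hxy m)
    exact Finset.sum_congr rfl (fun b _ => by ring)
  have inner2 : ∀ m : ℕ, ∑ b ∈ Finset.range (m+1),
      (b:ℝ)^2 * ((m.choose b:ℝ) * (1/(k:ℝ))^b * (1-1/(k:ℝ))^(m-b))
      = (m:ℝ) * ((m:ℝ)-1) * (1/(k:ℝ))^2 + (m:ℝ) * (1/(k:ℝ)) := by
    intro m
    have h2 := bsum2 (1/(k:ℝ)) (1-1/(k:ℝ)) hxy m
    have h1 := bsum1 (1/(k:ℝ)) (1-1/(k:ℝ)) hxy m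
    have : ∑ b ∈ Finset.range (m+1),
        (b:ℝ)^2 * ((m.choose b:ℝ) * (1/(k:ℝ))^b * (1-1/(k:ℝ))^(m-b))
        = ∑ b ∈ Finset.range (m+1),
          ((b:ℝ) * ((b:ℝ)-1) * (m.choose b:ℝ) * (1/(k:ℝ))^b * (1-1/(k:ℝ))^(m-b)
            + (b:ℝ) * (m.choose b:ℝ) * (1/(k:ℝ))^b * (1-1/(k:ℝ))^(m-b)) := by
      exact Finset.sum_congr rfl (fun b _ => by ring)
    rw [this, Finset.sum_add_distrib, h2, h1]
  have p0 : ∀ b, (ℙ {ω | n 0 ω = b}).toReal = if b = R then 1 else 0 := by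
    intro b
    by_cases hb : b = R
    · subst hb
      have : {ω | n 0 ω = b} = Set.univ := by
        ext ω; simp [h0 ω]
      rw [this]; simp
    · have : {ω | n 0 ω = b} = ∅ := by
        ext ω; simp only [Set.mem_setOf_eq, Set.mem_empty_iff_false, iff_false, h0 ω]
        exact fun h => hb h.symm
      rw [this]; simp [hb]
  have mom : ∀ i : ℕ,
      (∑ b ∈ Finset.range (R*k^i+1), (ℙ {ω | n i ω = b}).toReal = 1) ∧
      (∑ b ∈ Finset.range (R*k^i+1), (b:ℝ) * (ℙ {ω | n i ω = b}).toReal = R) ∧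
      (∑ b ∈ Finset.range (R*k^i+1), (b:ℝ)^2 * (ℙ {ω | n i ω = b}).toReal
        = (R:ℝ)^2 + i * R * (1 - 1/(k:ℝ))) := by
    intro i
    induction i with
    | zero =>
      have hrange : R * k^0 + 1 = R + 1 := by simp
      have hmem : R ∈ Finset.range (R+1) := Finset.mem_range.2 (Nat.lt_succ_self R)
      rw [hrange]
      refine ⟨?_, ?_, ?_⟩
      · rw [Finset.sum_eq_single R (fun b _ hb => by rw [p0 b, if_neg hb])
          (fun h => absurd hmem h)]
        rw [p0 R, if_pos rfl]
      · rw [Finset.sum_eq_single R (fun b _ hb => by rw [p0 b, if_neg hb, mul_zero])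
          (fun h => absurd hmem h)]
        rw [p0 R, if_pos rfl]; simp
      · rw [Finset.sum_eq_single R (fun b _ hb => by rw [p0 b, if_neg hb, mul_zero])
          (fun h => absurd hmem h)]
        rw [p0 R, if_pos rfl]; simp
    | succ i ih =>
      obtain ⟨ih0, ih1, ih2⟩ := ih
      have step0 : ∑ b ∈ Finset.range (R*k^(i+1)+1), (ℙ {ω | n (i+1) ω = b}).toReal = 1 := by
        have : ∑ b ∈ Finset.range (R*k^(i+1)+1), (ℙ {ω | n (i+1) ω = b}).toReal
            = ∑ b ∈ Finset.range (R*k^(i+1)+1), (1:ℝ) * (ℙ {ω | n (i+1) ω = b}).toReal := by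
          exact Finset.sum_congr rfl (fun b _ => (one_mul _).symm)
        rw [this, swap i (fun _ => (1:ℝ))]
        calc ∑ a ∈ Finset.range (R*k^i+1), (ℙ {ω | n i ω = a}).toReal *
              (∑ b ∈ Finset.range (a*k+1), (1:ℝ) *
                (((a*k).choose b : ℝ) * (1/(k:ℝ))^b * (1-1/(k:ℝ))^(a*k-b)))
            = ∑ a ∈ Finset.range (R*k^i+1), (ℙ {ω | n i ω = a}).toReal := by
              refine Finset.sum_congr rfl (fun a _ => ?_)
              rw [inner0 (a*k), mul_one]
          _ = 1 := ih0
      have step1 : ∑ b ∈ Finset.range (R*k^(i+1)+1),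
          (b:ℝ) * (ℙ {ω | n (i+1) ω = b}).toReal = R := by
        rw [swap i (fun b => (b:ℝ))]
        calc ∑ a ∈ Finset.range (R*k^i+1), (ℙ {ω | n i ω = a}).toReal *
              (∑ b ∈ Finset.range (a*k+1), (b:ℝ) *
                (((a*k).choose b : ℝ) * (1/(k:ℝ))^b * (1-1/(k:ℝ))^(a*k-b)))
            = ∑ a ∈ Finset.range (R*k^i+1), (a:ℝ) * (ℙ {ω | n i ω = a}).toReal := by
              refine Finset.sum_congr rfl (fun a _ => ?_)
              rw [inner1 (a*k)]
              push_cast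
              field_simp
          _ = R := ih1
      have step2 : ∑ b ∈ Finset.range (R*k^(i+1)+1),
          (b:ℝ)^2 * (ℙ {ω | n (i+1) ω = b}).toReal
          = (R:ℝ)^2 + ((i+1:ℕ):ℝ) * R * (1 - 1/(k:ℝ)) := by
        rw [swap i (fun b => (b:ℝ)^2)]
        have key : ∀ a : ℕ, (ℙ {ω | n i ω = a}).toReal *
            (∑ b ∈ Finset.range (a*k+1), (b:ℝ)^2 *
              (((a*k).choose b : ℝ) * (1/(k:ℝ))^b * (1-1/(k:ℝ))^(a*k-b)))
            = (a:ℝ)^2 * (ℙ {ω | n i ω = a}).toReal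
              + (1 - 1/(k:ℝ)) * ((a:ℝ) * (ℙ {ω | n i ω = a}).toReal) := by
          intro a
          rw [inner2 (a*k)]
          have hca : ((a*k : ℕ) : ℝ) = (a:ℝ) * k := by push_cast; ring
          rw [hca]
          field_simp
          ring
        calc ∑ a ∈ Finset.range (R*k^i+1), (ℙ {ω | n i ω = a}).toReal *
              (∑ b ∈ Finset.range (a*k+1), (b:ℝ)^2 *
                (((a*k).choose b : ℝ) * (1/(k:ℝ))^b * (1-1/(k:ℝ))^(a*k-b)))
            = ∑ a ∈ Finset.range (R*k^i+1), ((a:ℝ)^2 * (ℙ {ω | n i ω = a}).toReal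
              + (1 - 1/(k:ℝ)) * ((a:ℝ) * (ℙ {ω | n i ω = a}).toReal)) := by
              exact Finset.sum_congr rfl (fun a _ => key a)
          _ = (∑ a ∈ Finset.range (R*k^i+1), (a:ℝ)^2 * (ℙ {ω | n i ω = a}).toReal)
              + (1 - 1/(k:ℝ)) * ∑ a ∈ Finset.range (R*k^i+1),
                  (a:ℝ) * (ℙ {ω | n i ω = a}).toReal := by
              rw [Finset.sum_add_distrib, Finset.mul_sum]
          _ = (R:ℝ)^2 + ((i+1:ℕ):ℝ) * R * (1 - 1/(k:ℝ)) := by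
              rw [ih1, ih2]
              push_cast
              ring
      exact ⟨step0, step1, step2⟩
  intro i t ht htR
  obtain ⟨hmass, hmean, hsq⟩ := mom i
  have hgood_meas : MeasurableSet {ω | |(n i ω : ℝ) - (R:ℝ)| ≤ t} := by
    have he : {ω | |(n i ω : ℝ) - (R:ℝ)| ≤ t} = (n i) ⁻¹' {b : ℕ | |(b:ℝ) - (R:ℝ)| ≤ t} := rfl
    rw [he]
    exact hmeas i ((Set.to_countable _).measurableSet)
  have hterm : ∀ b : ℕ, {ω | |(n i ω : ℝ) - (R:ℝ)| ≤ t} ∩ {ω | n i ω = b}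
      = if |(b:ℝ) - (R:ℝ)| ≤ t then {ω | n i ω = b} else (∅ : Set Ω) := by
    intro b
    by_cases hb : |(b:ℝ) - (R:ℝ)| ≤ t
    · rw [if_pos hb]
      ext ω
      simp only [Set.mem_inter_iff, Set.mem_setOf_eq]
      exact ⟨fun h => h.2, fun h => ⟨by rw [h]; exact hb, h⟩⟩
    · rw [if_neg hb]
      ext ω
      simp only [Set.mem_inter_iff, Set.mem_setOf_eq, Set.mem_empty_iff_false, iff_false,
        not_and]
      intro h1 h2
      exact hb (h2 ▸ h1)
  have hgoodR : (ℙ {ω | |(n i ω : ℝ) - (R:ℝ)| ≤ t}).toReal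
      = ∑ b ∈ Finset.range (R*k^i+1),
          (if |(b:ℝ) - (R:ℝ)| ≤ t then (ℙ {ω | n i ω = b}).toReal else 0) := by
    rw [decomp2 i (R*k^i) (fun b hb => bound i b hb) _ hgood_meas,
      ENNReal.toReal_sum (fun _ _ => measure_ne_top _ _)]
    refine Finset.sum_congr rfl (fun b _ => ?_)
    rw [hterm b]
    split
    · rfl
    · simp
  have hvar : ∑ b ∈ Finset.range (R*k^i+1), ((b:ℝ) - (R:ℝ))^2 * (ℙ {ω | n i ω = b}).toReal
      = (i:ℝ) * R * (1 - 1/(k:ℝ)) := by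
    have e : ∑ b ∈ Finset.range (R*k^i+1), ((b:ℝ) - (R:ℝ))^2 * (ℙ {ω | n i ω = b}).toReal
        = (∑ b ∈ Finset.range (R*k^i+1), (b:ℝ)^2 * (ℙ {ω | n i ω = b}).toReal)
          - 2*(R:ℝ)*(∑ b ∈ Finset.range (R*k^i+1), (b:ℝ) * (ℙ {ω | n i ω = b}).toReal)
          + (R:ℝ)^2*(∑ b ∈ Finset.range (R*k^i+1), (ℙ {ω | n i ω = b}).toReal) := by
      rw [Finset.mul_sum, Finset.mul_sum, ← Finset.sum_sub_distrib, ← Finset.sum_add_distrib]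
      exact Finset.sum_congr rfl (fun b _ => by ring)
    rw [e, hmass, hmean, hsq]
    ring
  have key : 1 - (ℙ {ω | |(n i ω : ℝ) - (R:ℝ)| ≤ t}).toReal
      ≤ ((i:ℝ) * R * (1 - 1/(k:ℝ))) / t^2 := by
    have e1 : 1 - (ℙ {ω | |(n i ω : ℝ) - (R:ℝ)| ≤ t}).toReal
        = ∑ b ∈ Finset.range (R*k^i+1),
            ((ℙ {ω | n i ω = b}).toReal
              - (if |(b:ℝ) - (R:ℝ)| ≤ t then (ℙ {ω | n i ω = b}).toReal else 0)) := by
      rw [Finset.sum_sub_distrib, hmass, hgoodR]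
    rw [e1]
    have hle : ∑ b ∈ Finset.range (R*k^i+1),
        ((ℙ {ω | n i ω = b}).toReal - (if |(b:ℝ) - (R:ℝ)| ≤ t then (ℙ {ω | n i ω = b}).toReal else 0))
        ≤ ∑ b ∈ Finset.range (R*k^i+1),
          (((b:ℝ) - (R:ℝ))^2 / t^2) * (ℙ {ω | n i ω = b}).toReal := by
      refine Finset.sum_le_sum (fun b _ => ?_)
      have hp : 0 ≤ (ℙ {ω | n i ω = b}).toReal := ENNReal.toReal_nonneg
      by_cases hb : |(b:ℝ) - (R:ℝ)| ≤ t
      · rw [if_pos hb]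
        simp only [sub_self]
        positivity
      · rw [if_neg hb, sub_zero]
        have habs : t < |(b:ℝ) - (R:ℝ)| := lt_of_not_ge hb
        have h2 : t^2 ≤ ((b:ℝ) - (R:ℝ))^2 := by
          nlinarith [abs_nonneg ((b:ℝ) - (R:ℝ)), sq_abs ((b:ℝ) - (R:ℝ))]
        have h1 : 1 ≤ ((b:ℝ) - (R:ℝ))^2 / t^2 := (one_le_div (by positivity)).2 h2
        nlinarith
    refine le_trans hle ?_
    have : ∑ b ∈ Finset.range (R*k^i+1),
        (((b:ℝ) - (R:ℝ))^2 / t^2) * (ℙ {ω | n i ω = b}).toReal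
        = (∑ b ∈ Finset.range (R*k^i+1), ((b:ℝ) - (R:ℝ))^2 * (ℙ {ω | n i ω = b}).toReal) / t^2 := by
      rw [Finset.sum_div]
      exact Finset.sum_congr rfl (fun b _ => by ring)
    rw [this, hvar]

  have hk1 : (1:ℝ) ≤ (k:ℝ) := by exact_mod_cast Nat.one_le_of_lt hk
  have heq : (i:ℝ)*R*(1 - 1/(k:ℝ))/t^2 = (i:ℝ)*R*((k:ℝ)-1)/(t^2*(k:ℝ)) := by
    rw [div_eq_div_iff (by positivity) (by positivity)]
    field_simp
  have hi : (i:ℝ) ≤ 2 * (i:ℝ)^3 := by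
    rcases Nat.eq_zero_or_pos i with h|h
    · simp [h]
    · have h1 : (1:ℝ) ≤ (i:ℝ) := by exact_mod_cast h
      have h2 : (1:ℝ) ≤ (i:ℝ)^2 := by nlinarith
      have h3 : (i:ℝ)*1 ≤ (i:ℝ)*(i:ℝ)^2 := mul_le_mul_of_nonneg_left h2 (by linarith)
      nlinarith
  have hmono : (i:ℝ)*R*((k:ℝ)-1)/(t^2*(k:ℝ)) ≤ 2*(i:ℝ)^3*R*((k:ℝ)-1)/(t^2*(k:ℝ)) := by
    have hden : 0 < t^2*(k:ℝ) := by positivity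
    have hnum : (i:ℝ)*R*((k:ℝ)-1) ≤ 2*(i:ℝ)^3*R*((k:ℝ)-1) := by
      have hR0 : (0:ℝ) ≤ R := Nat.cast_nonneg R
      have hkm : (0:ℝ) ≤ (k:ℝ)-1 := by linarith
      have h3 : (i:ℝ)*R ≤ 2*(i:ℝ)^3*R := mul_le_mul_of_nonneg_right hi hR0
      exact mul_le_mul_of_nonneg_right h3 hkm
    have h4 := mul_le_mul_of_nonneg_right hnum (le_of_lt (inv_pos.2 hden))
    simpa [div_eq_mul_inv] using h4
  calc 1 - 2 * (i : ℝ) ^ 3 * R * ((k : ℝ) - 1) / (t ^ 2 * k)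
      ≤ 1 - (i:ℝ)*R*((k:ℝ)-1)/(t^2*(k:ℝ)) := by linarith [hmono]
    _ = 1 - (i:ℝ)*R*(1 - 1/(k:ℝ))/t^2 := by rw [heq]
    _ ≤ (ℙ {ω | |(n i ω : ℝ) - (R:ℝ)| ≤ t}).toReal := by linarith [key]
end
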